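/- arXiv:2110.01327 — 7 statements merged into one kernel-verified Lean document; each statement's English description precedes it below -/
import Mathlib

section
/- Let f(X) = a_0 + a_1 X + ... + a_n X^n be a polynomial with integer coefficients of degree n ≥ 2 such that every partial sum a_n + a_{n−1} + ... + a_{n−j}, for 0 ≤ j ≤ n, is non-negative. If f(m) is a prime number for some integer m > 1 + 1/sin(π/n), then f is irreducible over ℚ. -/
/-- The open sector with vertex `v` on the real axis and half-angle `θ`:
complex numbers `z ≠ v` with `|arg (z - v)| < θ`. -/
def sector (v θ : ℝ) : Set ℂ :=
  {z : ℂ | z ≠ (v : ℂ) ∧ |Complex.arg (z - (v : ℂ))| < θ}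

/-- The open upper half-sector: `z = v + ρ e^{iφ}` with `ρ > 0`, `0 < φ < θ`. -/
def sectorPlus (v θ : ℝ) : Set ℂ :=
  {z : ℂ | 0 < Complex.arg (z - (v : ℂ)) ∧ Complex.arg (z - (v : ℂ)) < θ}

/-- The open lower half-sector: `z = v + ρ e^{iφ}` with `ρ > 0`, `-θ < φ < 0`. -/
def sectorMinus (v θ : ℝ) : Set ℂ :=
  {z : ℂ | -θ < Complex.arg (z - (v : ℂ)) ∧ Complex.arg (z - (v : ℂ)) < 0}

open Polynomial Complex Finset


lemma sector_estimate {θ : ℝ} (hθ0 : 0 < θ) (hθπ : θ < Real.pi) {M : ℝ}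
    (hM : 1 + 1 / Real.sin θ < M) {z : ℂ}
    (h : z = 1 ∨ θ ≤ |Complex.arg (z - 1)|) : 1 < ‖(M : ℂ) - z‖ := by
  have hsin : 0 < Real.sin θ := Real.sin_pos_of_pos_of_lt_pi hθ0 hθπ
  have hsin1 : Real.sin θ ≤ 1 := Real.sin_le_one θ
  have hM1 : 1 < M - 1 := by
    have : 1 ≤ 1 / Real.sin θ := by rw [le_div_iff₀ hsin]; linarith
    linarith
  have hMs : 1 < (M - 1) * Real.sin θ := by
    rw [← div_lt_iff₀ hsin]
    linarith
  rcases h with rfl | h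
  · have h1 : ((M : ℂ) - 1) = ((M - 1 : ℝ) : ℂ) := by push_cast; ring
    rw [h1, Complex.norm_real, Real.norm_eq_abs, abs_of_pos (by linarith)]
    linarith
  · set w := z - 1 with hw
    have hw0 : w ≠ 0 := by
      intro h0
      rw [h0] at h
      simp only [Complex.arg_zero, abs_zero] at h
      linarith
    have hρ : 0 < ‖w‖ := by simpa using hw0
    set ρ := ‖w‖ with hρdef
    set φ := Complex.arg w with hφdef
    have hre : w.re = ρ * Real.cos φ := by
      rw [Complex.cos_arg hw0]; field_simp; rfl
    have hcos : Real.cos φ ≤ Real.cos θ := by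
      rw [← Real.cos_abs φ]
      exact Real.cos_le_cos_of_nonneg_of_le_pi hθ0.le (Complex.abs_arg_le_pi w) h
    have habs2 : (‖(M : ℂ) - z‖)^2 = (M - 1 - w.re)^2 + w.im^2 := by
      rw [Complex.sq_norm, Complex.normSq_apply]
      simp only [hw, Complex.sub_re, Complex.sub_im, Complex.ofReal_re, Complex.ofReal_im,
        Complex.one_re, Complex.one_im]
      ring
    have hρ2 : ρ^2 = w.re^2 + w.im^2 := by
      rw [hρdef, Complex.sq_norm, Complex.normSq_apply]; ring
    have hpyth := Real.sin_sq_add_cos_sq θ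
    have hr : w.re ≤ ρ * Real.cos θ := by
      rw [hre]; exact mul_le_mul_of_nonneg_left hcos hρ.le
    have h5 : (M - 1)^2 * (Real.sin θ^2 + Real.cos θ^2) = (M - 1)^2 := by
      rw [hpyth, mul_one]
    have key : 1 < (‖(M : ℂ) - z‖)^2 := by
      nlinarith [sq_nonneg (ρ - (M - 1) * Real.cos θ),
        mul_nonneg (by linarith : (0:ℝ) ≤ M - 1) (sub_nonneg.mpr hr),
        sq_nonneg ((M - 1) * Real.sin θ - 1), h5]
    nlinarith [norm_nonneg ((M : ℂ) - z)]


lemma im_expr_pos (n : ℕ) (hn : 2 ≤ n) (T : ℕ → ℤ) (hT : ∀ k ≤ n, 0 ≤ T k)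
    (hTn : 1 ≤ T n) (z : ℂ) (h1 : 0 < (z - 1).im)
    (h2 : Complex.arg (z - 1) < Real.pi / n) :
    0 < ((T 0 : ℂ) + (z - 1) * ∑ k ∈ Finset.range n, (T (k + 1) : ℂ) * z ^ k).im := by
  have hπ := Real.pi_pos
  have hn0 : (0:ℝ) < n := by positivity
  have hn2 : (2:ℝ) ≤ n := by exact_mod_cast hn
  have hθ2 : Real.pi / n ≤ Real.pi / 2 := by
    apply div_le_div_of_nonneg_left hπ.le (by norm_num) hn2
  set w := z - 1 with hw
  have hw0 : w ≠ 0 := fun h => by simp [h] at h1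
  set φ := Complex.arg w with hφ
  have hφ0 : 0 < φ := by
    rcases lt_or_eq_of_le (Complex.arg_nonneg_iff.mpr h1.le) with h | h
    · exact h
    · exact absurd (Complex.arg_eq_zero_iff.mp h.symm).2 h1.ne'
  have hφ2 : φ < Real.pi / 2 := lt_of_lt_of_le h2 hθ2
  have hwre : 0 < w.re := by
    have hc : 0 < Real.cos φ := Real.cos_pos_of_mem_Ioo ⟨by linarith, hφ2⟩
    have hρ : 0 < ‖w‖ := by simpa using hw0
    rw [← Complex.norm_mul_cos_arg w]
    exact mul_pos hρ hc
  have hzre : 0 < z.re := by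
    have : z.re = w.re + 1 := by simp [hw]
    rw [this]; linarith
  have hzim : 0 < z.im := by
    have : z.im = w.im := by simp [hw]
    rw [this]; exact h1
  have hz0 : z ≠ 0 := fun h => by simp [h] at hzim
  set α := Complex.arg z with hα
  have hα0 : 0 < α := by
    rcases lt_or_eq_of_le (Complex.arg_nonneg_iff.mpr hzim.le) with h | h
    · exact h
    · exact absurd (Complex.arg_eq_zero_iff.mp h.symm).2 hzim.ne'
  have hα2 : α < Real.pi / 2 := Complex.arg_lt_pi_div_two_iff.mpr (Or.inl hzre)
  -- α < φ via tangents
  have htan : Real.tan α < Real.tan φ := by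
    rw [hα, hφ, Complex.tan_arg, Complex.tan_arg]
    have hwim : z.im = w.im := by simp [hw]
    have hwre' : w.re = z.re - 1 := by simp [hw]
    rw [hwim, hwre']
    exact div_lt_div_of_pos_left h1 (by linarith) (by linarith)
  have hαφ : α < φ := by
    by_contra hcon
    push_neg at hcon
    have := Real.strictMonoOn_tan.monotoneOn ⟨by linarith, by linarith⟩ ⟨by linarith, by linarith⟩ hcon
    linarith
  have hρ : 0 < ‖w‖ := by simpa using hw0
  have hr : 0 < ‖z‖ := by simpa using hz0
  set ρ := ‖w‖
  set r := ‖z‖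
  -- each term's imaginary part
  have hterm : ∀ k : ℕ, (w * z ^ k).im = ρ * r ^ k * Real.sin (φ + k * α) := by
    intro k
    have e1 : w = ((ρ : ℝ) : ℂ) * Complex.exp ((φ : ℝ) * Complex.I) :=
      (Complex.norm_mul_exp_arg_mul_I w).symm
    have e2 : z = ((r : ℝ) : ℂ) * Complex.exp ((α : ℝ) * Complex.I) :=
      (Complex.norm_mul_exp_arg_mul_I z).symm
    have e3 : Complex.exp ((α : ℝ) * Complex.I) ^ k
        = Complex.exp (((k * α : ℝ) : ℂ) * Complex.I) := by
      rw [← Complex.exp_nat_mul]; congr 1; push_cast; ring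
    have e4 : Complex.exp (((φ : ℝ) : ℂ) * Complex.I) * Complex.exp (((k * α : ℝ) : ℂ) * Complex.I)
        = Complex.exp (((φ + k * α : ℝ) : ℂ) * Complex.I) := by
      rw [← Complex.exp_add]; congr 1; push_cast; ring
    have h1' : w * z ^ k = ((ρ * r ^ k : ℝ) : ℂ) * Complex.exp (((φ + k * α : ℝ) : ℂ) * Complex.I) := by
      conv_lhs => rw [e1, e2]
      rw [mul_pow, e3, ← e4]
      push_cast
      ring
    rw [h1']
    simp only [Complex.mul_im, Complex.ofReal_re, Complex.ofReal_im,
      Complex.exp_ofReal_mul_I_im, Complex.exp_ofReal_mul_I_re, zero_mul, add_zero]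
  -- sine positivity
  have hsin : ∀ k ∈ Finset.range n, 0 < Real.sin (φ + k * α) := by
    intro k hk
    have hk' : (k : ℝ) ≤ (n : ℝ) - 1 := by
      have := Finset.mem_range.mp hk
      have : (k:ℝ) ≤ (n:ℝ) - 1 := by
        have h3 : k + 1 ≤ n := Finset.mem_range.mp hk
        have : ((k+1 : ℕ):ℝ) ≤ (n:ℝ) := by exact_mod_cast h3
        push_cast at this; linarith
      exact this
    apply Real.sin_pos_of_pos_of_lt_pi
    · positivity
    · have h4 : φ + (k:ℝ) * α < φ + ((n:ℝ) - 1) * φ := by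
        rcases Nat.eq_zero_or_pos k with rfl | hk0
        · simp; nlinarith
        · have hk0' : (0:ℝ) < k := by exact_mod_cast hk0
          have : (k:ℝ) * α < (k:ℝ) * φ := by
            apply mul_lt_mul_of_pos_left hαφ hk0'
          nlinarith
      have h5 : φ + ((n:ℝ) - 1) * φ = (n:ℝ) * φ := by ring
      have h6 : (n:ℝ) * φ < (n:ℝ) * (Real.pi / n) := mul_lt_mul_of_pos_left h2 hn0
      have h7 : (n:ℝ) * (Real.pi / n) = Real.pi := by field_simp
      linarith
  -- rewrite the sum
  have hrw : ((T 0 : ℂ) + w * ∑ k ∈ Finset.range n, (T (k + 1) : ℂ) * z ^ k).im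
      = ∑ k ∈ Finset.range n, (T (k + 1) : ℝ) * ((w * z ^ k).im) := by
    rw [Complex.add_im, Complex.intCast_im, Finset.mul_sum, Complex.im_sum, zero_add]
    apply Finset.sum_congr rfl
    intro k _
    have : w * ((T (k + 1) : ℂ) * z ^ k) = (T (k + 1) : ℂ) * (w * z ^ k) := by ring
    rw [this]
    simp [Complex.mul_im]
  rw [hrw]
  apply Finset.sum_pos'
  · intro k hk
    have hTk : (0:ℝ) ≤ (T (k+1) : ℝ) := by
      have := hT (k+1) (Finset.mem_range.mp hk)
      exact_mod_cast this
    have := hsin k hk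
    rw [hterm k]
    positivity
  · refine ⟨n - 1, Finset.mem_range.mpr (by omega), ?_⟩
    have hmem : n - 1 ∈ Finset.range n := Finset.mem_range.mpr (by omega)
    have hTn' : (1:ℝ) ≤ (T (n - 1 + 1) : ℝ) := by
      have : n - 1 + 1 = n := by omega
      rw [this]; exact_mod_cast hTn
    have := hsin (n-1) hmem
    rw [hterm (n-1)]
    have : 0 < ρ * r ^ (n-1) * Real.sin (φ + (n-1 : ℕ) * α) := by positivity
    nlinarith

lemma no_root_in_sector (n : ℕ) (hn : 2 ≤ n) (T : ℕ → ℤ) (hT : ∀ k ≤ n, 0 ≤ T k)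
    (hTn : 1 ≤ T n) (z : ℂ) (hz1 : z ≠ 1) (hzarg : |Complex.arg (z - 1)| < Real.pi / n) :
    (T 0 : ℂ) + (z - 1) * ∑ k ∈ Finset.range n, (T (k + 1) : ℂ) * z ^ k ≠ 0 := by
  have hπ := Real.pi_pos
  have hn2 : (2:ℝ) ≤ n := by exact_mod_cast hn
  have hθ2 : Real.pi / n ≤ Real.pi / 2 := div_le_div_of_nonneg_left hπ.le (by norm_num) hn2
  have hw0 : z - 1 ≠ 0 := fun h => hz1 (by rwa [sub_eq_zero] at h)
  rcases lt_trichotomy (z - 1).im 0 with him | him | him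
  · -- lower sector: conjugate
    intro hzero
    set u := (starRingEnd ℂ) z with hu
    have hcz : (T 0 : ℂ) + (u - 1) * ∑ k ∈ Finset.range n, (T (k + 1) : ℂ) * u ^ k
        = (starRingEnd ℂ) ((T 0 : ℂ) + (z - 1) * ∑ k ∈ Finset.range n, (T (k + 1) : ℂ) * z ^ k) := by
      rw [map_add, map_mul, map_sum]
      simp [hu, map_pow]
    have him' : 0 < (u - 1).im := by
      simp only [hu, Complex.sub_im, Complex.conj_im, Complex.one_im]
      simp only [Complex.sub_im, Complex.one_im] at him
      linarith
    have harg' : Complex.arg (u - 1) < Real.pi / n := by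
      have h1 : u - 1 = (starRingEnd ℂ) (z - 1) := by rw [map_sub]; simp [hu]
      rw [h1, Complex.arg_conj]
      have hne : Complex.arg (z - 1) ≠ Real.pi := by
        intro h
        rw [h] at hzarg
        rw [abs_of_pos hπ] at hzarg
        have : Real.pi / n ≤ Real.pi / 2 := hθ2
        linarith
      rw [if_neg hne]
      calc -Complex.arg (z - 1) ≤ |Complex.arg (z - 1)| := neg_le_abs _
        _ < Real.pi / n := hzarg
    have := im_expr_pos n hn T hT hTn u him' harg'
    rw [hcz, hzero] at this
    simp at this
  · -- real case
    have hre : 0 < (z - 1).re := by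
      rcases lt_trichotomy (z - 1).re 0 with h | h | h
      · exfalso
        have : Complex.arg (z - 1) = Real.pi := Complex.arg_eq_pi_iff.mpr ⟨h, him⟩
        rw [this, abs_of_pos hπ] at hzarg
        linarith
      · exact absurd (Complex.ext h him) hw0
      · exact h
    set x := z.re with hx
    have hzim : z.im = 0 := by
      simpa [Complex.sub_im] using him
    have hzx : z = ((x : ℝ) : ℂ) := Complex.ext (by simp [hx]) (by simp [hzim])
    have hx1 : 1 < x := by
      simp only [Complex.sub_re, Complex.one_re] at hre
      linarith
    have hcast : (T 0 : ℂ) + (z - 1) * ∑ k ∈ Finset.range n, (T (k + 1) : ℂ) * z ^ k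
        = ((((T 0 : ℝ)) + (x - 1) * ∑ k ∈ Finset.range n, (T (k + 1) : ℝ) * x ^ k : ℝ) : ℂ) := by
      conv_lhs => rw [hzx]
      push_cast
      ring
    rw [hcast]
    rw [Ne, Complex.ofReal_eq_zero]
    have hsumpos : 0 < ∑ k ∈ Finset.range n, (T (k + 1) : ℝ) * x ^ k := by
      apply Finset.sum_pos'
      · intro k hk
        have h1 : (0:ℝ) ≤ (T (k + 1) : ℝ) := by
          exact_mod_cast hT (k + 1) (Finset.mem_range.mp hk)
        have h2 : (0:ℝ) < x ^ k := by positivity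
        positivity
      · refine ⟨n - 1, Finset.mem_range.mpr (by omega), ?_⟩
        have h3 : n - 1 + 1 = n := by omega
        have h4 : (1:ℝ) ≤ (T (n - 1 + 1) : ℝ) := by rw [h3]; exact_mod_cast hTn
        have h5 : (0:ℝ) < x ^ (n - 1) := by positivity
        nlinarith
    have hT0 : (0:ℝ) ≤ (T 0 : ℝ) := by exact_mod_cast hT 0 (by omega)
    nlinarith
  · -- upper sector
    intro hzero
    have := im_expr_pos n hn T hT hTn z him
      (lt_of_le_of_lt (le_abs_self _) hzarg)
    rw [hzero] at this
    simp at this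


lemma eval_identity (n : ℕ) (f : Polynomial ℤ) (hdeg : f.natDegree = n)
    (T : ℕ → ℤ) (hcoeff : ∀ k, k ≤ n → f.coeff k = T k - T (k + 1)) (hTn1 : T (n + 1) = 0)
    (z : ℂ) :
    (f.map (Int.castRingHom ℂ)).eval z
      = (T 0 : ℂ) + (z - 1) * ∑ k ∈ Finset.range n, (T (k + 1) : ℂ) * z ^ k := by
  have hinj : Function.Injective (Int.castRingHom ℂ) := Int.cast_injective
  have hFdeg : (f.map (Int.castRingHom ℂ)).natDegree < n + 1 := by
    rw [Polynomial.natDegree_map_eq_of_injective hinj, hdeg]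
    omega
  rw [Polynomial.eval_eq_sum_range' hFdeg]
  have h1 : ∑ i ∈ Finset.range (n + 1), (f.map (Int.castRingHom ℂ)).coeff i * z ^ i
      = ∑ i ∈ Finset.range (n + 1), ((T i : ℂ) - (T (i + 1) : ℂ)) * z ^ i := by
    apply Finset.sum_congr rfl
    intro i hi
    rw [Polynomial.coeff_map]
    have h2 := hcoeff i (by have := Finset.mem_range.mp hi; omega)
    simp only [eq_intCast]
    rw [h2]
    push_cast
    ring
  rw [h1]
  have h3 : ∑ i ∈ Finset.range (n + 1), ((T i : ℂ) - (T (i + 1) : ℂ)) * z ^ i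
      = ∑ i ∈ Finset.range (n + 1), (T i : ℂ) * z ^ i
        - ∑ i ∈ Finset.range (n + 1), (T (i + 1) : ℂ) * z ^ i := by
    rw [← Finset.sum_sub_distrib]
    apply Finset.sum_congr rfl
    intro i _
    ring
  rw [h3]
  rw [Finset.sum_range_succ' (fun i => (T i : ℂ) * z ^ i) n]
  rw [Finset.sum_range_succ (fun i => (T (i + 1) : ℂ) * z ^ i) n]
  rw [hTn1]
  push_cast
  rw [Finset.mul_sum]
  have h4 : ∑ i ∈ Finset.range n, (T (i + 1) : ℂ) * z ^ (i + 1)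
      - ∑ i ∈ Finset.range n, (T (i + 1) : ℂ) * z ^ i
      = ∑ i ∈ Finset.range n, (z - 1) * ((T (i + 1) : ℂ) * z ^ i) := by
    rw [← Finset.sum_sub_distrib]
    apply Finset.sum_congr rfl
    intro i _
    rw [pow_succ]
    ring
  rw [← h4]
  ring

lemma multiset_one_lt_prod (s : Multiset ℝ) (hs : s ≠ 0) (h : ∀ x ∈ s, 1 < x) : 1 < s.prod := by
  induction s using Multiset.induction with
  | empty => simp at hs
  | cons a t ih =>
    rw [Multiset.prod_cons]
    rcases eq_or_ne t 0 with rfl | ht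
    · simpa using h a (by simp)
    · have h1 := h a (Multiset.mem_cons_self a t)
      have h2 := ih ht (fun x hx => h x (Multiset.mem_cons_of_mem hx))
      nlinarith

lemma abs_eval_gt_one {f g : Polynomial ℤ} {m : ℤ} (hf : f ≠ 0)
    (hroots : ∀ z : ℂ, ((f.map (Int.castRingHom ℂ)).IsRoot z) → 1 < ‖(m : ℂ) - z‖)
    (hg : g ∣ f) (hgd : 0 < g.natDegree) : 1 < |g.eval m| := by
  have hg0 : g ≠ 0 := fun h => by simp [h] at hgd
  have hinj : Function.Injective (Int.castRingHom ℂ) := Int.cast_injective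
  set G := g.map (Int.castRingHom ℂ) with hG
  have hG0 : G ≠ 0 := by
    rw [hG, Ne, Polynomial.map_eq_zero_iff hinj]
    exact hg0
  have hGdeg : G.natDegree = g.natDegree := Polynomial.natDegree_map_eq_of_injective hinj g
  have hsplits : G.Splits := IsAlgClosed.splits G
  have hcard : G.roots.card = g.natDegree := by
    rw [← hGdeg]
    exact (Polynomial.splits_iff_card_roots.mp hsplits)
  have heval : G.eval ((m : ℤ) : ℂ) = ((g.eval m : ℤ) : ℂ) := by
    rw [hG, Polynomial.eval_map]
    exact Polynomial.eval₂_at_apply (Int.castRingHom ℂ) m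
  have hprod : G.eval ((m : ℤ) : ℂ)
      = G.leadingCoeff * ((G.roots.map fun a => ((m : ℤ) : ℂ) - a)).prod := by
    conv_lhs => rw [hsplits.eq_prod_roots]
    rw [Polynomial.eval_mul, Polynomial.eval_C, Polynomial.eval_multiset_prod, Multiset.map_map]
    congr 1
    apply congrArg Multiset.prod
    apply Multiset.map_congr rfl
    intro a _
    simp
  have hlead : G.leadingCoeff = ((g.leadingCoeff : ℤ) : ℂ) := by
    rw [hG, Polynomial.leadingCoeff_map_of_injective hinj]
    rfl
  have habs : |((g.eval m : ℤ) : ℝ)|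
      = |((g.leadingCoeff : ℤ) : ℝ)| * ((G.roots.map fun a => ‖((m : ℤ) : ℂ) - a‖)).prod := by
    have h9 := congrArg (normHom : ℂ →*₀ ℝ) (heval.symm.trans hprod)
    rw [map_mul, map_multiset_prod, Multiset.map_map] at h9
    rw [normHom_apply, normHom_apply, Complex.norm_intCast, hlead, Complex.norm_intCast] at h9
    simpa [Function.comp, normHom_apply] using h9
  have hleadge : (1:ℝ) ≤ |((g.leadingCoeff : ℤ) : ℝ)| := by
    have h8 : g.leadingCoeff ≠ 0 := Polynomial.leadingCoeff_ne_zero.mpr hg0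
    have := Int.one_le_abs h8
    rw [← Int.cast_abs]
    exact_mod_cast this
  have hprodgt : 1 < ((G.roots.map fun a => ‖((m : ℤ) : ℂ) - a‖)).prod := by
    apply multiset_one_lt_prod
    · intro h0
      rw [Multiset.map_eq_zero] at h0
      rw [h0] at hcard
      simp at hcard
      omega
    · intro x hx
      obtain ⟨a, ha, rfl⟩ := Multiset.mem_map.mp hx
      have hroot : G.IsRoot a := Polynomial.isRoot_of_mem_roots ha
      have hdvd : G ∣ f.map (Int.castRingHom ℂ) := Polynomial.map_dvd _ hg
      exact hroots a (hroot.dvd hdvd)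
  have : (1:ℝ) < |((g.eval m : ℤ) : ℝ)| := by
    rw [habs]
    calc (1:ℝ) < ((G.roots.map fun a => ‖((m : ℤ) : ℂ) - a‖)).prod := hprodgt
      _ ≤ _ := le_mul_of_one_le_left (by positivity) hleadge
  rw [← Int.cast_abs] at this
  exact_mod_cast this

theorem stmt_13 (n : ℕ) (hn : 2 ≤ n) (f : Polynomial ℤ) (hdeg : f.natDegree = n)
    (hsum : ∀ j ≤ n, 0 ≤ ∑ i ∈ Finset.range (j + 1), f.coeff (n - i))
    (m : ℤ) (hm : 1 + 1 / Real.sin (Real.pi / n) < (m : ℝ))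
    (p : ℕ) (hp : p.Prime) (hfm : f.eval m = (p : ℤ)) :
    Irreducible (f.map (Int.castRingHom ℚ)) := by
  have hπ := Real.pi_pos
  have hn2 : (2:ℝ) ≤ n := by exact_mod_cast hn
  have hθ2 : Real.pi / n ≤ Real.pi / 2 := div_le_div_of_nonneg_left hπ.le (by norm_num) hn2
  have hθπ : Real.pi / n < Real.pi := lt_of_le_of_lt hθ2 (by linarith)
  have hθ0 : 0 < Real.pi / (n:ℝ) := by positivity
  have hf0 : f ≠ 0 := by
    intro h
    rw [h, Polynomial.natDegree_zero] at hdeg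
    omega
  set T : ℕ → ℤ := fun k => ∑ i ∈ Finset.range (n + 1 - k), f.coeff (n - i) with hTdef
  have hTnn : ∀ k ≤ n, 0 ≤ T k := by
    intro k hk
    show 0 ≤ ∑ i ∈ Finset.range (n + 1 - k), f.coeff (n - i)
    have he : n + 1 - k = (n - k) + 1 := by omega
    rw [he]
    exact hsum (n - k) (by omega)
  have hTn1 : T (n + 1) = 0 := by
    show (∑ i ∈ Finset.range (n + 1 - (n + 1)), f.coeff (n - i)) = 0
    simp
  have hTnval : T n = f.coeff n := by
    show (∑ i ∈ Finset.range (n + 1 - n), f.coeff (n - i)) = f.coeff n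
    have he : n + 1 - n = 1 := by omega
    rw [he, Finset.sum_range_one]
    simp
  have hlead : f.coeff n ≠ 0 := by
    have h1 : f.leadingCoeff ≠ 0 := Polynomial.leadingCoeff_ne_zero.mpr hf0
    rwa [Polynomial.leadingCoeff, hdeg] at h1
  have hTn : 1 ≤ T n := by
    have h1 := hTnn n le_rfl
    rw [hTnval] at h1 ⊢
    omega
  have hcoeff : ∀ k, k ≤ n → f.coeff k = T k - T (k + 1) := by
    intro k hk
    show f.coeff k = (∑ i ∈ Finset.range (n + 1 - k), f.coeff (n - i))
      - (∑ i ∈ Finset.range (n + 1 - (k + 1)), f.coeff (n - i))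
    have h1 : n + 1 - k = (n - k) + 1 := by omega
    have h2 : n + 1 - (k + 1) = n - k := by omega
    rw [h1, h2, Finset.sum_range_succ]
    have h3 : n - (n - k) = k := by omega
    rw [h3]
    ring
  have hroots : ∀ z : ℂ, (f.map (Int.castRingHom ℂ)).IsRoot z
      → 1 < ‖(m : ℂ) - z‖ := by
    intro z hz
    have hc : (((m : ℝ) : ℂ)) = (m : ℂ) := by push_cast; rfl
    by_cases hz1 : z = 1
    · have := sector_estimate hθ0 hθπ hm (Or.inl hz1)
      rwa [hc] at this
    by_cases harg : Real.pi / n ≤ |Complex.arg (z - 1)|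
    · have := sector_estimate hθ0 hθπ hm (Or.inr harg)
      rwa [hc] at this
    push_neg at harg
    exfalso
    apply no_root_in_sector n hn T hTnn hTn z hz1 harg
    rw [← eval_identity n f hdeg T hcoeff hTn1 z]
    exact hz
  have hclaim : ∀ g : Polynomial ℤ, g ∣ f → 0 < g.natDegree → 1 < |g.eval m| :=
    fun g hg hgd => abs_eval_gt_one hf0 hroots hg hgd
  have hp2 : 2 ≤ (p:ℤ) := by exact_mod_cast hp.two_le
  have hprim : f.IsPrimitive := by
    intro r hr
    by_contra hu
    obtain ⟨h, hh⟩ := hr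
    have hr0 : r ≠ 0 := by
      rintro rfl
      rw [map_zero, zero_mul] at hh
      exact hf0 hh
    have hh0 : h ≠ 0 := by
      rintro rfl
      rw [mul_zero] at hh
      exact hf0 hh
    have hhdeg : h.natDegree = n := by
      have h1 := congrArg Polynomial.natDegree hh
      rw [Polynomial.natDegree_mul (by simpa using hr0) hh0, Polynomial.natDegree_C,
        zero_add, hdeg] at h1
      omega
    have heval2 : r * h.eval m = (p : ℤ) := by
      rw [← hfm, hh, Polynomial.eval_mul, Polynomial.eval_C]
    have hgt : 1 < |h.eval m| := hclaim h ⟨Polynomial.C r, by rw [hh]; ring⟩ (by omega)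
    have hrdvd : r ∣ (p : ℤ) := ⟨h.eval m, heval2.symm⟩
    have hnat : r.natAbs ∣ p := by
      have := Int.natAbs_dvd_natAbs.mpr hrdvd
      simpa using this
    rcases hp.eq_one_or_self_of_dvd _ hnat with h1 | h1
    · exact hu (Int.isUnit_iff_natAbs_eq.mpr h1)
    · have habsr : |r| = (p : ℤ) := by rw [Int.abs_eq_natAbs, h1]
      have habs : |r| * |h.eval m| = (p : ℤ) := by
        rw [← abs_mul, heval2]
        exact abs_of_nonneg (by positivity)
      nlinarith
  have hirr : Irreducible f := by
    constructor
    · exact Polynomial.not_isUnit_of_natDegree_pos f (by omega)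
    · intro a b hab
      have ha0 : a ≠ 0 := by rintro rfl; rw [zero_mul] at hab; exact hf0 hab
      have hb0 : b ≠ 0 := by rintro rfl; rw [mul_zero] at hab; exact hf0 hab
      rcases Nat.eq_zero_or_pos a.natDegree with h1 | h1
      · left
        have ha : a = Polynomial.C (a.coeff 0) := Polynomial.eq_C_of_natDegree_eq_zero h1
        have : IsUnit (a.coeff 0) := hprim (a.coeff 0) ⟨b, by rw [hab, ← ha]⟩
        rw [ha]
        exact Polynomial.isUnit_C.mpr this
      rcases Nat.eq_zero_or_pos b.natDegree with h2 | h2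
      · right
        have hb : b = Polynomial.C (b.coeff 0) := Polynomial.eq_C_of_natDegree_eq_zero h2
        have : IsUnit (b.coeff 0) := hprim (b.coeff 0) ⟨a, by rw [hab, ← hb]; ring⟩
        rw [hb]
        exact Polynomial.isUnit_C.mpr this
      · exfalso
        have hda : 1 < |a.eval m| := hclaim a ⟨b, hab⟩ h1
        have hdb : 1 < |b.eval m| := hclaim b ⟨a, by rw [hab]; ring⟩ h2
        have hevab : a.eval m * b.eval m = (p : ℤ) := by
          rw [← hfm, hab, Polynomial.eval_mul]
        have habs : |a.eval m| * |b.eval m| = (p : ℤ) := by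
          rw [← abs_mul, hevab]
          exact abs_of_nonneg (by positivity)
        have hdvd : (a.eval m).natAbs ∣ p := by
          have : a.eval m ∣ (p:ℤ) := ⟨b.eval m, hevab.symm⟩
          have := Int.natAbs_dvd_natAbs.mpr this
          simpa using this
        rcases hp.eq_one_or_self_of_dvd _ hdvd with h3 | h3
        · have : |a.eval m| = 1 := by rw [Int.abs_eq_natAbs, h3]; rfl
          omega
        · have h4 : |a.eval m| = (p:ℤ) := by rw [Int.abs_eq_natAbs, h3]
          nlinarith
  exact (Polynomial.IsPrimitive.Int.irreducible_iff_irreducible_map_cast hprim).mp hirr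
end

section
/- Let f(X) = a_0 + a_1 X + ... + a_n X^n be a polynomial with integer coefficients with a_0 ≠ 0 and a_n > 0, having at least one negative coefficient, and let j_1 < j_2 < ... < j_ℓ be all the indices j for which a_j < 0. If a_n > |a_{j_1} + a_{j_2} + ... + a_{j_ℓ}| and f(m) is a prime number for some integer m > 1 + 1/sin(π/n), then f is irreducible over ℚ. -/
set_option maxHeartbeats 1000000
section helpers

open Polynomial Complex Finset in
lemma sum_pos_core (n : ℕ) (a : ℕ → ℤ) (J : Finset ℕ)
    (hJdef : ∀ j, j ∈ J ↔ a j < 0) (hJlt : ∀ j ∈ J, j < n)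
    (hlt : |∑ j ∈ J, a j| < a n)
    (g : ℕ → ℝ) (hg0 : ∀ j, j ≤ n → 0 ≤ g j) (hgn : ∀ j, j ≤ n → g j ≤ g n)
    (hgpos : 0 < g n) :
    0 < ∑ j ∈ Finset.range (n + 1), (a j : ℝ) * g j := by
  have hJsub : J ⊆ Finset.range n := fun j hj => Finset.mem_range.mpr (hJlt j hj)
  have key : ∀ j ∈ Finset.range n,
      (if j ∈ J then (a j : ℝ) * g n else 0) ≤ (a j : ℝ) * g j := by
    intro j hj
    rw [Finset.mem_range] at hj
    by_cases hjJ : j ∈ J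
    · simp only [hjJ, if_true]
      have haj : (a j : ℝ) ≤ 0 := by exact_mod_cast le_of_lt ((hJdef j).mp hjJ)
      exact mul_le_mul_of_nonpos_left (hgn j hj.le) haj
    · simp only [hjJ, if_false]
      have haj : (0 : ℝ) ≤ (a j : ℝ) := by
        have := (hJdef j).not.mp hjJ
        push_neg at this
        exact_mod_cast this
      exact mul_nonneg haj (hg0 j hj.le)
  have h1 : (∑ j ∈ J, (a j : ℝ)) * g n ≤ ∑ j ∈ Finset.range n, (a j : ℝ) * g j := by
    calc (∑ j ∈ J, (a j : ℝ)) * g n = ∑ j ∈ J, (a j : ℝ) * g n := Finset.sum_mul _ _ _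
    _ = ∑ j ∈ Finset.range n, (if j ∈ J then (a j : ℝ) * g n else 0) := by
        rw [Finset.sum_ite_mem, Finset.inter_eq_right.mpr hJsub]
    _ ≤ _ := Finset.sum_le_sum key
  have h2 : ∑ j ∈ Finset.range (n+1), (a j : ℝ) * g j
      = (∑ j ∈ Finset.range n, (a j : ℝ) * g j) + (a n : ℝ) * g n := by
    rw [Finset.sum_range_succ]
  have h3 : (0:ℝ) < ((∑ j ∈ J, a j : ℤ) : ℝ) * g n + (a n : ℝ) * g n := by
    have : (0:ℤ) < (∑ j ∈ J, a j) + a n := by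
      have := neg_abs_le (∑ j ∈ J, a j); omega
    have h4 : (0:ℝ) < ((∑ j ∈ J, a j : ℤ) : ℝ) + (a n : ℝ) := by exact_mod_cast this
    nlinarith
  rw [h2]
  push_cast at h3 ⊢
  nlinarith [h1]

open Polynomial Complex Finset in
lemma pow_mul_im (z w : ℂ) (k : ℕ) :
    (z ^ k * w).im =
      (‖z‖) ^ k * ‖w‖ * Real.sin (k * Complex.arg z + Complex.arg w) := by
  have key : z ^ k * w = ((‖z‖ ^ k * ‖w‖ : ℝ) : ℂ) *
      Complex.exp (((k * Complex.arg z + Complex.arg w : ℝ) : ℂ) * Complex.I) := by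
    conv_lhs => rw [← Complex.norm_mul_exp_arg_mul_I z, ← Complex.norm_mul_exp_arg_mul_I w]
    rw [mul_pow, ← Complex.exp_nat_mul, ← mul_mul_mul_comm, ← Complex.exp_add]
    push_cast
    ring_nf
  rw [key, Complex.mul_im, Complex.ofReal_re, Complex.ofReal_im,
    Complex.exp_ofReal_mul_I_im, Complex.exp_ofReal_mul_I_re]
  ring

lemma arg_pos_of_im_pos {z : ℂ} (h : 0 < z.im) : 0 < Complex.arg z := by
  by_contra hc
  push_neg at hc
  have h1 : Real.sin (Complex.arg z) ≤ 0 :=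
    Real.sin_nonpos_of_nonpos_of_neg_pi_le hc (Complex.neg_pi_lt_arg z).le
  rw [Complex.sin_arg] at h1
  have hz : z ≠ 0 := fun h0 => by simp [h0] at h
  have habs : 0 < ‖z‖ := norm_pos_iff.mpr hz
  have : 0 < z.im / ‖z‖ := div_pos h habs
  linarith

lemma arg_lt_pi_of_im_pos {z : ℂ} (h : 0 < z.im) : Complex.arg z < Real.pi := by
  rcases lt_or_eq_of_le (Complex.arg_le_pi z) with h1 | h1
  · exact h1
  · exfalso
    have := Complex.arg_eq_pi_iff.mp h1
    linarith [this.2]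

/-- imaginary parts of powers increase along the chain. -/
lemma im_pow_lt_succ {n : ℕ} {z : ℂ} (him : 0 < z.im)
    (hangle : ((n : ℝ) - 1) * Complex.arg z + Complex.arg (z - 1) < Real.pi)
    {k : ℕ} (hk : k < n) : (z ^ k).im < (z ^ (k + 1)).im := by
  have hz : z ≠ 0 := fun h0 => by simp [h0] at him
  have hw : z - 1 ≠ 0 := fun h0 => by
    have : (z - 1).im = 0 := by rw [h0]; rfl
    simp [Complex.sub_im] at this; linarith
  have hsub : z ^ (k + 1) - z ^ k = z ^ k * (z - 1) := by ring
  have him' : (z ^ (k+1)).im - (z ^ k).im = (z ^ k * (z - 1)).im := by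
    rw [← Complex.sub_im, hsub]
  have hψ : 0 < Complex.arg z := arg_pos_of_im_pos him
  have hφ : 0 < Complex.arg (z - 1) := by
    apply arg_pos_of_im_pos; simp [Complex.sub_im]; linarith
  have hang2 : (k : ℝ) * Complex.arg z + Complex.arg (z - 1) < Real.pi := by
    have hk' : (k : ℝ) ≤ (n : ℝ) - 1 := by
      have : (k : ℝ) + 1 ≤ (n : ℝ) := by exact_mod_cast hk
      linarith
    nlinarith
  have hsin : 0 < Real.sin ((k : ℝ) * Complex.arg z + Complex.arg (z - 1)) := by
    apply Real.sin_pos_of_pos_of_lt_pi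
    · positivity
    · exact hang2
  have habs : 0 < (‖z‖) ^ k * ‖z - 1‖ :=
    mul_pos (pow_pos (norm_pos_iff.mpr hz) k) (norm_pos_iff.mpr hw)
  nlinarith [pow_mul_im z (z - 1) k, him']

open Polynomial Complex Finset in
lemma im_eval_pos (n : ℕ) (hn : 1 ≤ n) (a : ℕ → ℤ) (J : Finset ℕ)
    (hJdef : ∀ j, j ∈ J ↔ a j < 0) (hJlt : ∀ j ∈ J, j < n)
    (hlt : |∑ j ∈ J, a j| < a n)
    (z : ℂ) (him : 0 < z.im)
    (hangle : ((n : ℝ) - 1) * Complex.arg z + Complex.arg (z - 1) < Real.pi) :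
    0 < (∑ j ∈ Finset.range (n + 1), (a j : ℂ) * z ^ j).im := by
  have step : ∀ k, k < n → (z ^ k).im < (z ^ (k + 1)).im :=
    fun k hk => im_pow_lt_succ him hangle hk
  have mono : ∀ d k, k + d ≤ n → (z ^ k).im ≤ (z ^ (k + d)).im := by
    intro d
    induction d with
    | zero => intro k _; simp
    | succ D ih =>
      intro k hk
      have h1 : k + D ≤ n := by omega
      have h2 : k + D < n := by omega
      have h3 : (z ^ k).im ≤ (z ^ (k + D)).im := ih k h1
      have h4 : (z ^ (k + D)).im < (z ^ (k + D + 1)).im := step _ h2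
      have h5 : k + D + 1 = k + (D + 1) := by omega
      rw [h5] at h4
      linarith
  have hg0 : ∀ j, j ≤ n → 0 ≤ (z ^ j).im := by
    intro j hj
    have := mono j 0 (by omega)
    simpa using this
  have hgn : ∀ j, j ≤ n → (z ^ j).im ≤ (z ^ n).im := by
    intro j hj
    have := mono (n - j) j (by omega)
    rwa [Nat.add_sub_cancel' hj] at this
  have hgpos : 0 < (z ^ n).im := by
    have h1 := step 0 (by omega)
    have h2 := hgn 1 hn
    simp only [pow_zero, Complex.one_im] at h1
    linarith
  have hsum := sum_pos_core n a J hJdef hJlt hlt (fun j => (z ^ j).im) hg0 hgn hgpos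
  have heq : (∑ j ∈ Finset.range (n + 1), (a j : ℂ) * z ^ j).im
      = ∑ j ∈ Finset.range (n + 1), (a j : ℝ) * (z ^ j).im := by
    rw [Complex.im_sum]
    apply Finset.sum_congr rfl
    intro j _
    simp [Complex.mul_im]
  rw [heq]
  exact hsum

open Polynomial Complex Finset in
lemma root_far_aux (n : ℕ) (hn : 1 ≤ n) (a : ℕ → ℤ) (J : Finset ℕ)
    (hJdef : ∀ j, j ∈ J ↔ a j < 0) (hJlt : ∀ j ∈ J, j < n)
    (hlt : |∑ j ∈ J, a j| < a n)
    (m : ℤ) (hm : 1 + 1 / Real.sin (Real.pi / n) < (m : ℝ))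
    (z : ℂ) (him : 0 ≤ z.im) (habs : ‖z - (m : ℂ)‖ ≤ 1)
    (hz : ∑ j ∈ Finset.range (n + 1), (a j : ℂ) * z ^ j = 0) : False := by
  have hsin_nonneg : 0 ≤ Real.sin (Real.pi / n) := by
    apply Real.sin_nonneg_of_nonneg_of_le_pi
    · positivity
    · rcases Nat.eq_zero_or_pos n with h | h
      · simp [h]; positivity
      · apply div_le_self Real.pi_pos.le
        exact_mod_cast h
  have hm1 : (1:ℝ) < (m:ℝ) := by
    have : 0 ≤ 1 / Real.sin (Real.pi / n) := by positivity
    linarith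
  have hsq : (z.re - (m:ℝ))^2 + z.im^2 ≤ 1 := by
    have h1 : (‖z - (m:ℂ)‖)^2 ≤ 1 := by nlinarith [norm_nonneg (z - (m:ℂ))]
    rw [Complex.sq_norm, Complex.normSq_apply] at h1
    simp only [Complex.sub_re, Complex.sub_im, Complex.intCast_re, Complex.intCast_im,
      sub_zero] at h1
    nlinarith [h1]
  have hy1 : z.im ≤ 1 := by nlinarith [sq_nonneg (z.re - (m:ℝ)), sq_nonneg (z.im - 1)]
  have hre : (m:ℝ) - Real.sqrt (1 - z.im^2) ≤ z.re := by
    have h2 : |z.re - (m:ℝ)| ≤ Real.sqrt (1 - z.im^2) := Real.abs_le_sqrt (by nlinarith)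
    have h3 := abs_le.mp h2
    linarith [h3.1]
  rcases eq_or_lt_of_le him with him0 | him0
  · -- real case
    have hzx : z = (z.re : ℂ) := by
      apply Complex.ext
      · simp
      · simp [← him0]
    have hsqrt1 : Real.sqrt (1 - z.im^2) ≤ 1 := by
      calc Real.sqrt (1 - z.im^2) ≤ Real.sqrt 1 := by
            apply Real.sqrt_le_sqrt; nlinarith [sq_nonneg z.im]
        _ = 1 := Real.sqrt_one
    have hx1 : (1:ℝ) ≤ z.re := by
      have hm2 : (2:ℝ) ≤ (m:ℝ) := by
        have : (1:ℤ) < m := by exact_mod_cast hm1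
        exact_mod_cast this
      linarith
    have hpos := sum_pos_core n a J hJdef hJlt hlt (fun j => z.re ^ j)
      (fun j _ => pow_nonneg (by linarith) j)
      (fun j hj => pow_le_pow_right₀ (by linarith) hj)
      (pow_pos (by linarith) n)
    have hcast : ∑ j ∈ Finset.range (n + 1), (a j : ℂ) * ((z.re : ℝ) : ℂ) ^ j
        = ((∑ j ∈ Finset.range (n + 1), (a j : ℝ) * z.re ^ j : ℝ) : ℂ) := by
      push_cast; ring
    rw [← hzx, hz] at hcast
    have : (∑ j ∈ Finset.range (n + 1), (a j : ℝ) * z.re ^ j) = 0 := by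
      exact_mod_cast hcast.symm
    simp only [this] at hpos
    exact lt_irrefl 0 hpos
  · -- imaginary positive case
    have hangle : ((n : ℝ) - 1) * Complex.arg z + Complex.arg (z - 1) < Real.pi := by
      have hwim : 0 < (z - 1).im := by simp only [Complex.sub_im, Complex.one_im, sub_zero]; linarith
      rcases eq_or_lt_of_le hn with hn1 | hn2
      · have : ((n:ℝ) - 1) = 0 := by rw [← hn1]; norm_num
        rw [this, zero_mul, zero_add]
        exact arg_lt_pi_of_im_pos hwim
      · have hn2' : (2:ℝ) ≤ (n:ℝ) := by exact_mod_cast hn2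
        have hnpos : (0:ℝ) < n := by linarith
        have hθpos : 0 < Real.pi / n := by positivity
        have hθle : Real.pi / n ≤ Real.pi / 2 :=
          div_le_div_of_nonneg_left Real.pi_pos.le (by norm_num) hn2'
        have hθltpi : Real.pi / n < Real.pi := div_lt_self Real.pi_pos (by linarith)
        have hs : 0 < Real.sin (Real.pi / n) := Real.sin_pos_of_pos_of_lt_pi hθpos hθltpi
        have hc : 0 ≤ Real.cos (Real.pi / n) := Real.cos_nonneg_of_mem_Icc ⟨by linarith, hθle⟩
        have hminv : 1 / Real.sin (Real.pi / n) < (m:ℝ) - 1 := by linarith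
        have hy0 : 0 < z.im := him0
        have key1 : Real.sqrt (1 - z.im^2) * Real.sin (Real.pi / n)
            + z.im * Real.cos (Real.pi / n) ≤ 1 := by
          have h1 : Real.sin (Real.pi / n + Real.arcsin z.im) ≤ 1 := Real.sin_le_one _
          rw [Real.sin_add, Real.sin_arcsin (by linarith) (by linarith),
            Real.cos_arcsin] at h1
          nlinarith
        have key2 : z.im * Real.cos (Real.pi / n) < (z.re - 1) * Real.sin (Real.pi / n) := by
          have h3 : (1/Real.sin (Real.pi / n) - Real.sqrt (1 - z.im^2)) * Real.sin (Real.pi / n)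
              < (z.re - 1) * Real.sin (Real.pi / n) := by
            apply mul_lt_mul_of_pos_right _ hs
            linarith
          have h4 : (1/Real.sin (Real.pi / n) - Real.sqrt (1 - z.im^2)) * Real.sin (Real.pi / n)
              = 1 - Real.sqrt (1 - z.im^2) * Real.sin (Real.pi / n) := by
            field_simp
          linarith
        have hwre : 0 < z.re - 1 := by nlinarith [mul_nonneg hy0.le hc]
        have hwne : z - 1 ≠ 0 := by
          intro h0
          have h0' : (z - 1).im = 0 := by rw [h0]; rfl
          simp only [Complex.sub_im, Complex.one_im, sub_zero] at h0'
          linarith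
        have hwabs : 0 < ‖z - 1‖ := norm_pos_iff.mpr hwne
        have hwabs_sq : (‖z - 1‖)^2 = (z.re - 1)^2 + z.im^2 := by
          rw [Complex.sq_norm, Complex.normSq_apply]
          simp only [Complex.sub_re, Complex.sub_im, Complex.one_re, Complex.one_im, sub_zero]
          ring
        have habs_s : z.im < ‖z - 1‖ * Real.sin (Real.pi / n) := by
          have e1 : 0 ≤ z.im * Real.cos (Real.pi / n) := mul_nonneg hy0.le hc
          have e2 : (z.im * Real.cos (Real.pi / n))^2
              < ((z.re - 1) * Real.sin (Real.pi / n))^2 := by nlinarith [key2, e1]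
          have e5 : (‖z-1‖ * Real.sin (Real.pi / n))^2
              = ((z.re-1)^2 + z.im^2) * (Real.sin (Real.pi / n))^2 := by
            rw [mul_pow, hwabs_sq]
          have e6 := Real.sin_sq_add_cos_sq (Real.pi / n)
          have e7 : z.im^2 < (‖z-1‖ * Real.sin (Real.pi / n))^2 := by
            nlinarith [e2, e5, e6]
          exact lt_of_pow_lt_pow_left₀ 2 (mul_nonneg (norm_nonneg _) hs.le) e7
        have hsinφ_lt : Real.sin (Complex.arg (z - 1)) < Real.sin (Real.pi / n) := by
          rw [Complex.sin_arg]
          simp only [Complex.sub_im, Complex.one_im, sub_zero]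
          rw [div_lt_iff₀ hwabs]
          linarith
        have hwim' : 0 < (z-1).im := by
          simp only [Complex.sub_im, Complex.one_im, sub_zero]; linarith
        have hφpos : 0 < Complex.arg (z - 1) := arg_pos_of_im_pos hwim'
        have hφlt2 : Complex.arg (z - 1) < Real.pi / 2 := by
          by_contra hcon
          push_neg at hcon
          have hcos : Real.cos (Complex.arg (z - 1)) ≤ 0 :=
            Real.cos_nonpos_of_pi_div_two_le_of_le hcon
              (le_trans (Complex.arg_le_pi _) (by linarith [Real.pi_pos]))
          rw [Complex.cos_arg hwne] at hcos
          have : 0 < (z - 1).re / ‖z - 1‖ := by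
            apply div_pos _ hwabs
            simp only [Complex.sub_re, Complex.one_re]; linarith
          linarith
        have hφθ : Complex.arg (z - 1) < Real.pi / n := by
          have hmem1 : Complex.arg (z - 1) ∈ Set.Icc (-(Real.pi/2)) (Real.pi/2) :=
            ⟨by linarith, by linarith⟩
          have hmem2 : Real.pi / n ∈ Set.Icc (-(Real.pi/2)) (Real.pi/2) := ⟨by linarith, hθle⟩
          exact (Real.strictMonoOn_sin.lt_iff_lt hmem1 hmem2).mp hsinφ_lt
        have hzne : z ≠ 0 := by
          intro h0; rw [h0] at hy0; simp at hy0
        have hzabs : 0 < ‖z‖ := norm_pos_iff.mpr hzne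
        have hzabs_gt : ‖z - 1‖ < ‖z‖ := by
          have h5 : (‖z‖)^2 = z.re^2 + z.im^2 := by
            rw [Complex.sq_norm, Complex.normSq_apply]; ring
          have h6 : (‖z-1‖)^2 < (‖z‖)^2 := by
            rw [h5, hwabs_sq]; nlinarith
          exact lt_of_pow_lt_pow_left₀ 2 (norm_nonneg _) h6
        have hsinψ_lt : Real.sin (Complex.arg z) < Real.sin (Complex.arg (z - 1)) := by
          rw [Complex.sin_arg, Complex.sin_arg]
          simp only [Complex.sub_im, Complex.one_im, sub_zero]
          exact div_lt_div_of_pos_left hy0 hwabs hzabs_gt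
        have hψpos : 0 < Complex.arg z := arg_pos_of_im_pos hy0
        have hψlt2 : Complex.arg z < Real.pi / 2 := by
          by_contra hcon
          push_neg at hcon
          have hcos : Real.cos (Complex.arg z) ≤ 0 :=
            Real.cos_nonpos_of_pi_div_two_le_of_le hcon
              (le_trans (Complex.arg_le_pi _) (by linarith [Real.pi_pos]))
          rw [Complex.cos_arg hzne] at hcos
          have : 0 < z.re / ‖z‖ := by
            apply div_pos _ hzabs; linarith
          linarith
        have hψφ : Complex.arg z < Complex.arg (z - 1) := by
          have hmem1 : Complex.arg z ∈ Set.Icc (-(Real.pi/2)) (Real.pi/2) :=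
            ⟨by linarith, by linarith⟩
          have hmem2 : Complex.arg (z-1) ∈ Set.Icc (-(Real.pi/2)) (Real.pi/2) :=
            ⟨by linarith, by linarith⟩
          exact (Real.strictMonoOn_sin.lt_iff_lt hmem1 hmem2).mp hsinψ_lt
        have hnθ : (n:ℝ) * (Real.pi / n) = Real.pi := by field_simp
        have h8 : ((n:ℝ)-1) * Complex.arg z ≤ ((n:ℝ)-1) * Complex.arg (z - 1) :=
          mul_le_mul_of_nonneg_left hψφ.le (by linarith)
        have h10 : (n:ℝ) * Complex.arg (z-1) < (n:ℝ) * (Real.pi / n) :=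
          mul_lt_mul_of_pos_left hφθ (by linarith)
        nlinarith
    have hfin := im_eval_pos n hn a J hJdef hJlt hlt z him0 hangle
    rw [hz] at hfin
    simp at hfin

open Polynomial Complex Finset in
lemma root_far (n : ℕ) (hn : 1 ≤ n) (a : ℕ → ℤ) (J : Finset ℕ)
    (hJdef : ∀ j, j ∈ J ↔ a j < 0) (hJlt : ∀ j ∈ J, j < n)
    (hlt : |∑ j ∈ J, a j| < a n)
    (m : ℤ) (hm : 1 + 1 / Real.sin (Real.pi / n) < (m : ℝ))
    (z : ℂ) (hz : ∑ j ∈ Finset.range (n + 1), (a j : ℂ) * z ^ j = 0) :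
    1 < ‖z - (m : ℂ)‖ := by
  by_contra hcon
  push_neg at hcon
  rcases le_or_gt 0 z.im with him | him
  · exact root_far_aux n hn a J hJdef hJlt hlt m hm z him hcon hz
  · set w := (starRingEnd ℂ) z with hw
    have hwim : 0 ≤ w.im := by
      rw [hw]; simp [Complex.conj_im]; linarith
    have hwz : ∑ j ∈ Finset.range (n + 1), (a j : ℂ) * w ^ j = 0 := by
      rw [hw]
      have : ∑ j ∈ Finset.range (n + 1), (a j : ℂ) * ((starRingEnd ℂ) z) ^ j
          = (starRingEnd ℂ) (∑ j ∈ Finset.range (n + 1), (a j : ℂ) * z ^ j) := by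
        rw [map_sum]
        apply Finset.sum_congr rfl
        intro j _
        rw [map_mul, map_pow]
        congr 1
        simp
      rw [this, hz, map_zero]
    have habsw : ‖w - (m : ℂ)‖ ≤ 1 := by
      have : w - (m:ℂ) = (starRingEnd ℂ) (z - (m:ℂ)) := by
        rw [hw, map_sub]
        congr 1
        simp
      rw [this, Complex.norm_conj]
      exact hcon
    exact root_far_aux n hn a J hJdef hJlt hlt m hm w hwim habsw hwz

open Polynomial Complex Finset in
lemma factor_abs_gt (f u : Polynomial ℤ) (m : ℤ)
    (hfar : ∀ z : ℂ, (f.map (Int.castRingHom ℂ)).eval z = 0 → 1 < ‖z - (m : ℂ)‖)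
    (hu : u ∣ f) (hdeg : 0 < u.natDegree) : 1 < |u.eval m| := by
  have hinj : Function.Injective (Int.castRingHom ℂ) := Int.cast_injective
  set U := u.map (Int.castRingHom ℂ) with hU
  have hune : u ≠ 0 := by
    intro h0; rw [h0] at hdeg; simp at hdeg
  have hUne : U ≠ 0 := by
    rw [hU, Ne, Polynomial.map_eq_zero_iff hinj]
    exact hune
  have hUdeg : U.natDegree = u.natDegree := Polynomial.natDegree_map_eq_of_injective hinj u
  have hsplit : U.Splits := IsAlgClosed.splits U
  have hcard : U.roots.card = u.natDegree := by
    rw [← hUdeg]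
    exact (Polynomial.splits_iff_card_roots).mp hsplit
  have hfact := hsplit.eq_prod_roots
  have heval : U.eval ((m : ℤ) : ℂ) =
      U.leadingCoeff * ((U.roots.map fun α => ((m : ℤ) : ℂ) - α).prod) := by
    conv_lhs => rw [hfact]
    rw [Polynomial.eval_mul, Polynomial.eval_C, Polynomial.eval_multiset_prod,
      Multiset.map_map]
    congr 1
    rw [Multiset.map_congr rfl]
    intro α _
    simp
  have haveq : ‖U.eval ((m : ℤ) : ℂ)‖ =
      ‖U.leadingCoeff‖ *
        ((U.roots.map fun α => ‖((m : ℤ) : ℂ) - α‖).prod) := by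
    rw [heval, norm_mul]; congr 1
    exact (Multiset.prod_hom _ (normHom : ℂ →*₀ ℝ)).symm.trans (by rw [Multiset.map_map]; rfl)
  -- leading coefficient
  have hlead : U.leadingCoeff = ((u.leadingCoeff : ℤ) : ℂ) :=
    Polynomial.leadingCoeff_map_of_injective hinj u
  have hlead1 : 1 ≤ ‖U.leadingCoeff‖ := by
    rw [hlead, Complex.norm_intCast]
    have : u.leadingCoeff ≠ 0 := Polynomial.leadingCoeff_ne_zero.mpr hune
    have h1 : (1:ℤ) ≤ |u.leadingCoeff| := Int.one_le_abs this
    calc (1:ℝ) ≤ (|u.leadingCoeff| : ℝ) := by exact_mod_cast h1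
      _ = |(u.leadingCoeff : ℝ)| := by push_cast; rfl
  -- roots are far
  have hroots : ∀ x ∈ U.roots.map fun α => ‖((m : ℤ) : ℂ) - α‖, 1 < x := by
    intro x hx
    rw [Multiset.mem_map] at hx
    obtain ⟨α, hα, rfl⟩ := hx
    have hUα : U.eval α = 0 := Polynomial.isRoot_of_mem_roots hα
    obtain ⟨v, hv⟩ := hu
    have hFα : (f.map (Int.castRingHom ℂ)).eval α = 0 := by
      rw [hv, Polynomial.map_mul, Polynomial.eval_mul, ← hU, hUα, zero_mul]
    have := hfar α hFα
    rw [norm_sub_rev]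
    exact this
  -- product is > 1
  set M := U.roots.map fun α => ‖((m : ℤ) : ℂ) - α‖ with hM
  have hMcard : 0 < Multiset.card M := by
    rw [hM, Multiset.card_map, hcard]
    exact hdeg
  obtain ⟨x, hxM⟩ := Multiset.card_pos_iff_exists_mem.mp hMcard
  obtain ⟨t, ht⟩ := Multiset.exists_cons_of_mem hxM
  have htprod : 1 ≤ t.prod := by
    apply Multiset.one_le_prod
    intro y hy
    have : y ∈ M := by rw [ht]; exact Multiset.mem_cons_of_mem hy
    exact (hroots y this).le
  have hMprod : 1 < M.prod := by
    rw [ht, Multiset.prod_cons]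
    have hx1 : 1 < x := hroots x hxM
    nlinarith
  have hfinal : 1 < ‖U.eval ((m : ℤ) : ℂ)‖ := by
    rw [haveq]
    nlinarith [norm_nonneg U.leadingCoeff]
  have hevalcast : U.eval ((m : ℤ) : ℂ) = ((u.eval m : ℤ) : ℂ) := by
    rw [hU]
    exact Polynomial.eval_intCast_map (Int.castRingHom ℂ) u m
  rw [hevalcast, Complex.norm_intCast] at hfinal
  rw [← Int.cast_abs] at hfinal
  exact_mod_cast hfinal

end helpers

open Polynomial Complex Finset in
theorem stmt_14 (n : ℕ) (f : Polynomial ℤ) (hdeg : f.natDegree = n)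
    (ha0 : f.coeff 0 ≠ 0) (han : 0 < f.coeff n)
    (J : Finset ℕ) (hJ : J.Nonempty)
    (hJdef : ∀ j, j ∈ J ↔ f.coeff j < 0)
    (hlt : |∑ j ∈ J, f.coeff j| < f.coeff n)
    (m : ℤ) (hm : 1 + 1 / Real.sin (Real.pi / n) < (m : ℝ))
    (p : ℕ) (hp : p.Prime) (hfm : f.eval m = (p : ℤ)) :
    Irreducible (f.map (Int.castRingHom ℚ)) := by
  have hn1 : 1 ≤ n := by
    rcases Nat.eq_zero_or_pos n with h0 | h
    · exfalso
      obtain ⟨j, hj⟩ := hJ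
      have hjneg := (hJdef j).mp hj
      have hjle : j ≤ f.natDegree :=
        Polynomial.le_natDegree_of_ne_zero (by intro h; rw [h] at hjneg; exact lt_irrefl 0 hjneg)
      rw [hdeg, h0] at hjle
      have hj0 : j = 0 := Nat.le_zero.mp hjle
      rw [hj0] at hjneg
      rw [h0] at han
      omega
    · exact h
  have hJlt : ∀ j ∈ J, j < n := by
    intro j hj
    have hjneg := (hJdef j).mp hj
    have hjle : j ≤ n := by
      rw [← hdeg]
      exact Polynomial.le_natDegree_of_ne_zero (by intro h; rw [h] at hjneg; exact lt_irrefl 0 hjneg)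
    rcases lt_or_eq_of_le hjle with h | h
    · exact h
    · exfalso; rw [h] at hjneg; omega
  have hfar : ∀ z : ℂ, (f.map (Int.castRingHom ℂ)).eval z = 0 →
      1 < ‖z - (m : ℂ)‖ := by
    intro z hzev
    apply root_far n hn1 f.coeff J hJdef hJlt hlt m hm
    have hdlt : (f.map (Int.castRingHom ℂ)).natDegree < n + 1 := by
      have h := Polynomial.natDegree_map_le (f := Int.castRingHom ℂ) (p := f)
      omega
    rw [Polynomial.eval_eq_sum_range' hdlt] at hzev
    rw [← hzev]
    apply Finset.sum_congr rfl
    intro j _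
    rw [Polynomial.coeff_map]
    rfl
  have hfne : f ≠ 0 := by
    intro h0; apply ha0; rw [h0]; simp
  have hpp := Polynomial.eq_C_content_mul_primPart f
  have hg : Irreducible f.primPart := by
    constructor
    · intro hu
      have := Polynomial.natDegree_eq_zero_of_isUnit hu
      rw [Polynomial.natDegree_primPart, hdeg] at this; omega
    · intro u v huv
      by_contra hcon
      push_neg at hcon
      obtain ⟨hu, hv⟩ := hcon
      have hudeg : 0 < u.natDegree := by
        by_contra hd
        push_neg at hd
        have hd0 : u.natDegree = 0 := Nat.le_zero.mp (Nat.lt_succ_iff.mp (Nat.lt_succ_of_le hd))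
        have hC : u = Polynomial.C (u.coeff 0) := Polynomial.eq_C_of_natDegree_eq_zero hd0
        have hdvd : Polynomial.C (u.coeff 0) ∣ f.primPart := by
          rw [← hC]; exact ⟨v, huv⟩
        have hdc : u.coeff 0 ∣ f.primPart.content := Polynomial.dvd_content_iff_C_dvd.mpr hdvd
        rw [Polynomial.content_primPart] at hdc
        exact hu (hC ▸ Polynomial.isUnit_C.mpr (isUnit_of_dvd_one hdc))
      have hvdeg : 0 < v.natDegree := by
        by_contra hd
        push_neg at hd
        have hd0 : v.natDegree = 0 := Nat.le_zero.mp (Nat.lt_succ_iff.mp (Nat.lt_succ_of_le hd))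
        have hC : v = Polynomial.C (v.coeff 0) := Polynomial.eq_C_of_natDegree_eq_zero hd0
        have hdvd : Polynomial.C (v.coeff 0) ∣ f.primPart := by
          rw [← hC]; exact ⟨u, by rw [huv, mul_comm]⟩
        have hdc : v.coeff 0 ∣ f.primPart.content := Polynomial.dvd_content_iff_C_dvd.mpr hdvd
        rw [Polynomial.content_primPart] at hdc
        exact hv (hC ▸ Polynomial.isUnit_C.mpr (isUnit_of_dvd_one hdc))
      have hudvd : u ∣ f := dvd_trans ⟨v, huv⟩ f.primPart_dvd
      have hvdvd : v ∣ f := dvd_trans ⟨u, by rw [huv, mul_comm]⟩ f.primPart_dvd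
      have h1 : 1 < |u.eval m| := factor_abs_gt f u m hfar hudvd hudeg
      have h2 : 1 < |v.eval m| := factor_abs_gt f v m hfar hvdvd hvdeg
      have heq : f.content * (u.eval m * v.eval m) = (p : ℤ) := by
        rw [← hfm]
        conv_rhs => rw [hpp]
        rw [Polynomial.eval_mul, Polynomial.eval_C, huv, Polynomial.eval_mul]
      have hnat : f.content.natAbs * ((u.eval m).natAbs * (v.eval m).natAbs) = p := by
        have hcong := congrArg Int.natAbs heq
        rwa [Int.natAbs_mul, Int.natAbs_mul, Int.natAbs_natCast] at hcong
      have hu2 : 2 ≤ (u.eval m).natAbs := by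
        have : 1 < (u.eval m).natAbs := by
          rw [Int.abs_eq_natAbs] at h1
          exact_mod_cast h1
        omega
      have hv2 : 2 ≤ (v.eval m).natAbs := by
        have : 1 < (v.eval m).natAbs := by
          rw [Int.abs_eq_natAbs] at h2
          exact_mod_cast h2
        omega
      have hdvdp : (u.eval m).natAbs ∣ p :=
        ⟨f.content.natAbs * (v.eval m).natAbs, by rw [← hnat]; ring⟩
      rcases hp.eq_one_or_self_of_dvd _ hdvdp with h | h
      · omega
      · rw [h] at hnat
        have hppos : 0 < p := hp.pos
        have hone : f.content.natAbs * (v.eval m).natAbs = 1 := by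
          have h3 : (f.content.natAbs * (v.eval m).natAbs) * p = 1 * p := by
            calc (f.content.natAbs * (v.eval m).natAbs) * p
                = f.content.natAbs * (p * (v.eval m).natAbs) := by ring
              _ = p := hnat
              _ = 1 * p := (one_mul p).symm
          exact Nat.eq_of_mul_eq_mul_right hppos h3
        have := Nat.eq_one_of_mul_eq_one_left hone
        omega
  have hprim := f.isPrimitive_primPart
  have hirrQ : Irreducible (f.primPart.map (Int.castRingHom ℚ)) :=
    (Polynomial.IsPrimitive.Int.irreducible_iff_irreducible_map_cast hprim).mp hg
  have hmapeq : f.map (Int.castRingHom ℚ)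
      = Polynomial.C ((f.content : ℤ) : ℚ) * f.primPart.map (Int.castRingHom ℚ) := by
    conv_lhs => rw [hpp]
    rw [Polynomial.map_mul, Polynomial.map_C]
    rfl
  have hcne : ((f.content : ℤ) : ℚ) ≠ 0 := by
    have hcz : f.content ≠ 0 := fun h => hfne (Polynomial.content_eq_zero_iff.mp h)
    exact_mod_cast hcz
  have hunit : IsUnit (Polynomial.C ((f.content : ℤ) : ℚ)) :=
    Polynomial.isUnit_C.mpr (isUnit_iff_ne_zero.mpr hcne)
  rw [hmapeq]
  have hassoc : Associated (f.primPart.map (Int.castRingHom ℚ))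
      (Polynomial.C ((f.content : ℤ) : ℚ) * f.primPart.map (Int.castRingHom ℚ)) :=
    ⟨hunit.unit, by rw [IsUnit.unit_spec]; exact (mul_comm _ _)⟩
  exact hassoc.irreducible hirrQ
end

section
/- Let f(X) = a_0 + a_1 X + ... + a_n X^n be a polynomial with integer coefficients of degree n ≥ 2 with a_n > 0, having exactly one sign change between consecutive non-zero coefficients; that is, there exists an index k with 1 ≤ k ≤ n such that a_i ≤ 0 for all i < k, a_i ≥ 0 for all i ≥ k, and a_i < 0 for at least one i < k. If f(1) > 0 and f(m) is a prime number for some integer m > 1 + 1/sin(π/n), then f is irreducible over ℚ. -/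
open Polynomial Finset

noncomputable section StmtAux

lemma im_rexp (r θ : ℝ) : ((r : ℂ) * Complex.exp (θ * Complex.I)).im = r * Real.sin θ := by
  simp [Complex.exp_mul_I, Complex.mul_im, Complex.sin_ofReal_re]

lemma pow_eq_aux (z : ℂ) (t : ℕ) :
    z ^ t = ((‖z‖ ^ t : ℝ) : ℂ) * Complex.exp ((t * z.arg : ℝ) * Complex.I) := by
  conv_lhs => rw [← Complex.norm_mul_exp_arg_mul_I z]
  rw [mul_pow, ← Complex.exp_nat_mul]
  push_cast
  ring_nf

lemma im_pow_aux (z : ℂ) (t : ℕ) : (z ^ t).im = ‖z‖ ^ t * Real.sin (t * z.arg) := by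
  rw [pow_eq_aux, im_rexp]

lemma im_pow_mul_aux (z : ℂ) (t : ℕ) :
    (z ^ t * (z - 1)).im
      = ‖z‖ ^ t * ‖z - 1‖ * Real.sin (t * z.arg + (z - 1).arg) := by
  conv_lhs => rw [pow_eq_aux, ← Complex.norm_mul_exp_arg_mul_I (z - 1)]
  rw [mul_mul_mul_comm, ← Complex.exp_add, ← add_mul, ← Complex.ofReal_mul,
    ← Complex.ofReal_add, im_rexp]

lemma telescope_aux (z : ℂ) (i j : ℕ) (hij : i ≤ j) :
    z ^ j - z ^ i = ∑ t ∈ Finset.Ico i j, z ^ t * (z - 1) := by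
  have h : ∀ t : ℕ, z ^ t * (z - 1) = z ^ (t + 1) - z ^ t := by intro t; ring
  simp_rw [h]
  rw [Finset.sum_Ico_eq_sub _ hij, Finset.sum_range_sub, Finset.sum_range_sub]
  ring

section Main

variable (n : ℕ) (hn : 2 ≤ n) (f : Polynomial ℤ) (hdeg : f.natDegree = n)
    (han : 0 < f.coeff n)
    (k : ℕ) (hk1 : 1 ≤ k) (hkn : k ≤ n)
    (hneg : ∀ i < k, f.coeff i ≤ 0)
    (hpos : ∀ i, k ≤ i → 0 ≤ f.coeff i)
    (hex : ∃ i < k, f.coeff i < 0)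
    (hf1 : 0 < f.eval 1)

include hn hdeg han hk1 hkn hneg hpos hex hf1

/-- positivity on the reals greater than 1 -/
lemma real_eval_pos (x : ℝ) (hx : 1 < x) :
    0 < (f.map (Int.castRingHom ℝ)).eval x := by
  have hFdeg : (f.map (Int.castRingHom ℝ)).natDegree = n := by
    rw [Polynomial.natDegree_map_eq_of_injective, hdeg]
    exact Int.cast_injective
  set a : ℕ → ℝ := fun i => ((f.coeff i : ℤ) : ℝ) with ha
  have heval : (f.map (Int.castRingHom ℝ)).eval x = ∑ i ∈ Finset.range (n + 1), a i * x ^ i := by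
    rw [Polynomial.eval_eq_sum_range, hFdeg]
    exact Finset.sum_congr rfl fun i _ => by simp [ha]
  have htot : ∑ i ∈ Finset.range (n + 1), a i = ((f.eval 1 : ℤ) : ℝ) := by
    have := Polynomial.eval_eq_sum_range (p := f) (1 : ℤ)
    rw [hdeg] at this
    rw [this]
    push_cast
    simp [ha]
  have hxpos : (0:ℝ) < x := by linarith
  have hx1 : (0:ℝ) ≤ x := le_of_lt hxpos
  -- bound the negative part
  have hb1 : ∀ i ∈ Finset.range k, a i * x ^ (k - 1) ≤ a i * x ^ i := by
    intro i hi
    have hik : i ≤ k - 1 := by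
      have := Finset.mem_range.mp hi; omega
    have hxi : x ^ i ≤ x ^ (k - 1) := pow_le_pow_right₀ (by linarith) hik
    have hai : a i ≤ 0 := by
      have := hneg i (Finset.mem_range.mp hi)
      simp only [ha]
      exact_mod_cast this
    nlinarith
  have hb2 : ∀ j ∈ Finset.Ico k (n + 1), a j * x ^ k ≤ a j * x ^ j := by
    intro j hj
    have hkj : k ≤ j := (Finset.mem_Ico.mp hj).1
    have hxj : x ^ k ≤ x ^ j := pow_le_pow_right₀ (by linarith) hkj
    have haj : 0 ≤ a j := by
      have := hpos j hkj
      simp only [ha]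
      exact_mod_cast this
    nlinarith
  have hsplit : ∑ i ∈ Finset.range k, a i * x ^ i + ∑ j ∈ Finset.Ico k (n + 1), a j * x ^ j
      = ∑ i ∈ Finset.range (n + 1), a i * x ^ i :=
    Finset.sum_range_add_sum_Ico _ (by omega)
  have hsplit' : ∑ i ∈ Finset.range k, a i + ∑ j ∈ Finset.Ico k (n + 1), a j
      = ∑ i ∈ Finset.range (n + 1), a i :=
    Finset.sum_range_add_sum_Ico _ (by omega)
  set Sn := ∑ i ∈ Finset.range k, a i with hSn
  set Sp := ∑ j ∈ Finset.Ico k (n + 1), a j with hSp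
  have hSppos : 0 < Sp := by
    have h1 : a n ≤ Sp := Finset.single_le_sum (f := a)
      (fun j hj => by
        have := hpos j (Finset.mem_Ico.mp hj).1
        simp only [ha]; exact_mod_cast this)
      (Finset.mem_Ico.mpr ⟨hkn, by omega⟩)
    have h2 : (0:ℝ) < a n := by simp only [ha]; exact_mod_cast han
    linarith
  have hT : (1:ℝ) ≤ Sn + Sp := by
    rw [hsplit', htot]
    exact_mod_cast hf1
  have hbound1 : Sn * x ^ (k - 1) ≤ ∑ i ∈ Finset.range k, a i * x ^ i := by
    rw [hSn, Finset.sum_mul]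
    exact Finset.sum_le_sum hb1
  have hbound2 : Sp * x ^ k ≤ ∑ j ∈ Finset.Ico k (n + 1), a j * x ^ j := by
    rw [hSp, Finset.sum_mul]
    exact Finset.sum_le_sum hb2
  have hxk : x ^ k = x ^ (k - 1) * x := by
    rw [← pow_succ]
    congr 1
    omega
  have hxk1pos : 0 < x ^ (k - 1) := pow_pos hxpos _
  rw [heval, ← hsplit]
  nlinarith [mul_pos hSppos hxk1pos]

/-- no roots in the closed-below upper half sector -/
lemma no_root_upper (z : ℂ) (hz : (f.map (Int.castRingHom ℂ)).eval z = 0)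
    (h0 : 0 < (z - 1).arg) (h1 : (z - 1).arg < Real.pi / n) : False := by
  have hnR : (2:ℝ) ≤ (n:ℝ) := by exact_mod_cast hn
  have hnpos : (0:ℝ) < (n:ℝ) := by linarith
  have hpi := Real.pi_pos
  set φ := (z - 1).arg with hφ
  set α := z.arg with hα
  have hθ2 : Real.pi / n ≤ Real.pi / 2 := by
    apply div_le_div_of_nonneg_left (le_of_lt hpi) (by norm_num) hnR
  have hφ2 : φ < Real.pi / 2 := lt_of_lt_of_le h1 hθ2
  have hz1 : z - 1 ≠ 0 := by
    intro h
    rw [h] at hφ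
    simp [Complex.arg_zero] at hφ
    rw [hφ] at h0
    linarith
  have habs1 : 0 < ‖z - 1‖ := norm_pos_iff.mpr hz1
  have hcosφ : 0 < Real.cos φ :=
    Real.cos_pos_of_mem_Ioo ⟨by linarith, hφ2⟩
  have hsinφ : 0 < Real.sin φ := Real.sin_pos_of_pos_of_lt_pi h0 (by linarith)
  have hre : 1 < z.re := by
    have h : (z - 1).re = ‖z - 1‖ * Real.cos φ := by
      rw [hφ, Complex.cos_arg hz1, mul_comm, div_mul_cancel₀ _ (ne_of_gt habs1)]
    have h2 : (0:ℝ) < (z - 1).re := by rw [h]; positivity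
    simp only [Complex.sub_re, Complex.one_re] at h2
    linarith
  have him : 0 < z.im := by
    have h : (z - 1).im = ‖z - 1‖ * Real.sin φ := by
      rw [hφ, Complex.sin_arg, mul_comm, div_mul_cancel₀ _ (ne_of_gt habs1)]
    have h2 : (0:ℝ) < (z - 1).im := by rw [h]; positivity
    simp only [Complex.sub_im, Complex.one_im, sub_zero] at h2
    exact h2
  have hz0 : z ≠ 0 := by
    intro h; rw [h] at hre; simp at hre; linarith
  have habsz : 0 < ‖z‖ := norm_pos_iff.mpr hz0
  have hα0 : 0 ≤ α := Complex.arg_nonneg_iff.mpr (le_of_lt him)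
  have hα2 : α < Real.pi / 2 := by
    have := Complex.abs_arg_lt_pi_div_two_iff.mpr (Or.inl (by linarith : 0 < z.re))
    exact lt_of_abs_lt this
  have hαφ : α ≤ φ := by
    by_contra hcon
    push_neg at hcon
    have htan := Real.tan_lt_tan_of_nonneg_of_lt_pi_div_two (le_of_lt h0) hα2 hcon
    rw [hα] at htan
    rw [hφ] at htan
    rw [Complex.tan_arg, Complex.tan_arg] at htan
    have hrez : (z - 1).re = z.re - 1 := by simp [Complex.sub_re]
    have himz : (z - 1).im = z.im := by simp [Complex.sub_im]
    rw [hrez, himz] at htan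
    have : z.im / z.re < z.im / (z.re - 1) :=
      div_lt_div_of_pos_left him (by linarith) (by linarith)
    linarith
  have hnφ : (n:ℝ) * φ < Real.pi := by
    rw [lt_div_iff₀ hnpos] at h1
    linarith [h1]
  -- nonneg imaginary parts of powers
  have him_pow : ∀ i : ℕ, i ≤ n → 0 ≤ (z ^ i).im := by
    intro i hi
    rw [im_pow_aux]
    apply mul_nonneg (by positivity)
    apply Real.sin_nonneg_of_nonneg_of_le_pi
    · positivity
    · have h1' : (i:ℝ) * α ≤ (n:ℝ) * φ := by
        apply mul_le_mul (by exact_mod_cast hi) hαφ hα0 (by linarith)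
      linarith
  -- positive imaginary parts of differences
  have him_diff : ∀ i j : ℕ, i < j → j ≤ n → 0 < (z ^ j - z ^ i).im := by
    intro i j hij hjn
    rw [telescope_aux z i j (le_of_lt hij), Complex.im_sum]
    apply Finset.sum_pos
    · intro t ht
      have htn : t ≤ n - 1 := by
        have := (Finset.mem_Ico.mp ht).2; omega
      rw [im_pow_mul_aux]
      apply mul_pos (by positivity)
      apply Real.sin_pos_of_pos_of_lt_pi
      · have : 0 ≤ (t:ℝ) * α := by positivity
        linarith
      · have h1' : (t:ℝ) * α ≤ ((n:ℝ) - 1) * φ := by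
          apply mul_le_mul _ hαφ hα0 (by linarith)
          · have : (t:ℝ) ≤ (n:ℝ) - 1 := by
              have : ((t:ℝ)) ≤ ((n - 1 : ℕ) : ℝ) := by exact_mod_cast htn
              rw [Nat.cast_sub (by omega)] at this
              simpa using this
            exact this
        nlinarith
    · exact Finset.nonempty_Ico.mpr hij
  -- the sum identity
  set a : ℕ → ℝ := fun i => ((f.coeff i : ℤ) : ℝ) with ha
  set v : ℕ → ℝ := fun i => (z ^ i).im with hv
  have hFdeg : (f.map (Int.castRingHom ℂ)).natDegree = n := by
    rw [Polynomial.natDegree_map_eq_of_injective, hdeg]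
    exact Int.cast_injective
  have h0sum : ∑ i ∈ Finset.range (n + 1), a i * v i = 0 := by
    have := Polynomial.eval_eq_sum_range (p := f.map (Int.castRingHom ℂ)) z
    rw [hFdeg, hz] at this
    have him0 := congrArg Complex.im this.symm
    rw [Complex.im_sum, Complex.zero_im] at him0
    rw [← him0]
    apply Finset.sum_congr rfl
    intro i _
    simp [ha, hv, Polynomial.coeff_map, Complex.mul_im]
  have hsplit : ∑ i ∈ Finset.range k, a i * v i + ∑ j ∈ Finset.Ico k (n + 1), a j * v j
      = ∑ i ∈ Finset.range (n + 1), a i * v i :=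
    Finset.sum_range_add_sum_Ico _ (by omega)
  have hsplit' : ∑ i ∈ Finset.range k, a i + ∑ j ∈ Finset.Ico k (n + 1), a j
      = ∑ i ∈ Finset.range (n + 1), a i :=
    Finset.sum_range_add_sum_Ico _ (by omega)
  have htot : ∑ i ∈ Finset.range (n + 1), a i = ((f.eval 1 : ℤ) : ℝ) := by
    have := Polynomial.eval_eq_sum_range (p := f) (1 : ℤ)
    rw [hdeg] at this
    rw [this]; push_cast; simp [ha]
  set N := ∑ i ∈ Finset.range k, a i * v i with hN
  set P := ∑ j ∈ Finset.Ico k (n + 1), a j * v j with hP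
  set A := ∑ j ∈ Finset.Ico k (n + 1), a j with hA
  set C := ∑ i ∈ Finset.range k, a i with hC
  have haneg : ∀ i ∈ Finset.range k, a i ≤ 0 := fun i hi => by
    have := hneg i (Finset.mem_range.mp hi); simp only [ha]; exact_mod_cast this
  have hapos : ∀ j ∈ Finset.Ico k (n + 1), 0 ≤ a j := fun j hj => by
    have := hpos j (Finset.mem_Ico.mp hj).1; simp only [ha]; exact_mod_cast this
  have hvpos : ∀ i ∈ Finset.range k, 0 ≤ v i := fun i hi => by
    exact him_pow i (by have := Finset.mem_range.mp hi; omega)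
  have hNle : N ≤ 0 := Finset.sum_nonpos fun i hi =>
    mul_nonpos_of_nonpos_of_nonneg (haneg i hi) (hvpos i hi)
  have hCA : C + A = ((f.eval 1 : ℤ) : ℝ) := by rw [hA, hC, hsplit', htot]
  have hf1R : (1:ℝ) ≤ C + A := by rw [hCA]; exact_mod_cast hf1
  -- the double sum
  set D := ∑ i ∈ Finset.range k, ∑ j ∈ Finset.Ico k (n + 1), (-a i) * a j * (v j - v i) with hD
  have hDpos : 0 < D := by
    obtain ⟨i0, hi0k, hi0⟩ := hex
    apply Finset.sum_pos'
    · intro i hi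
      apply Finset.sum_nonneg
      intro j hj
      have h1' : 0 ≤ -a i := by linarith [haneg i hi]
      have h2' : 0 ≤ a j := hapos j hj
      have h3' : 0 ≤ v j - v i := by
        have := him_diff i j (by
          have := Finset.mem_range.mp hi
          have := (Finset.mem_Ico.mp hj).1
          omega) (by have := (Finset.mem_Ico.mp hj).2; omega)
        simp only [hv]
        rw [Complex.sub_im] at this
        linarith
      positivity
    · refine ⟨i0, Finset.mem_range.mpr hi0k, ?_⟩
      apply Finset.sum_pos'
      · intro j hj
        have h1' : 0 ≤ -a i0 := by
          have : a i0 < 0 := by simp only [ha]; exact_mod_cast hi0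
          linarith
        have h2' : 0 ≤ a j := hapos j hj
        have h3' : 0 ≤ v j - v i0 := by
          have := him_diff i0 j (by
            have := (Finset.mem_Ico.mp hj).1; omega)
            (by have := (Finset.mem_Ico.mp hj).2; omega)
          simp only [hv]
          rw [Complex.sub_im] at this
          linarith
        positivity
      · refine ⟨n, Finset.mem_Ico.mpr ⟨hkn, by omega⟩, ?_⟩
        have h1' : 0 < -a i0 := by
          have : a i0 < 0 := by simp only [ha]; exact_mod_cast hi0
          linarith
        have h2' : 0 < a n := by simp only [ha]; exact_mod_cast han
        have h3' : 0 < v n - v i0 := by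
          have := him_diff i0 n (by omega) (le_refl n)
          simp only [hv]
          rw [Complex.sub_im] at this
          linarith
        positivity
  have hDeq : D = (∑ i ∈ Finset.range k, (-a i)) * P
      - (∑ i ∈ Finset.range k, (-a i) * v i) * A := by
    rw [hD, Finset.sum_mul, Finset.sum_mul, ← Finset.sum_sub_distrib]
    apply Finset.sum_congr rfl
    intro i _
    rw [hP, hA, Finset.mul_sum, Finset.mul_sum, ← Finset.sum_sub_distrib]
    apply Finset.sum_congr rfl
    intro j _
    ring
  have hM1 : ∑ i ∈ Finset.range k, (-a i) = -C := by
    rw [hC]; exact Finset.sum_neg_distrib _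
  have hM2 : ∑ i ∈ Finset.range k, (-a i) * v i = -N := by
    rw [hN, ← Finset.sum_neg_distrib]
    exact Finset.sum_congr rfl fun i _ => by ring
  have hPN : N + P = 0 := by rw [hN, hP, hsplit, h0sum]
  have hDval : D = (C + A) * N := by
    rw [hDeq, hM1, hM2]
    have hPneg : P = -N := by linarith [hPN]
    rw [hPneg]; ring
  have : D ≤ 0 := by
    rw [hDval]
    exact mul_nonpos_of_nonneg_of_nonpos (by linarith) hNle
  linarith


/-- every complex root is outside the sector at 1 of half-angle π/n -/
lemma key_arg (z : ℂ) (hz : (f.map (Int.castRingHom ℂ)).eval z = 0) :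
    Real.pi / n ≤ |(z - 1).arg| := by
  by_contra hcon
  push_neg at hcon
  rcases lt_trichotomy ((z - 1).arg) 0 with hneg' | hzero | hpos'
  · -- lower half: pass to the conjugate
    have hzc : (f.map (Int.castRingHom ℂ)).eval ((starRingEnd ℂ) z) = 0 := by
      rw [Polynomial.eval_map] at hz ⊢
      have h2 := Polynomial.hom_eval₂ f (Int.castRingHom ℂ) (starRingEnd ℂ) z
      rw [hz, map_zero] at h2
      rw [show ((starRingEnd ℂ).comp (Int.castRingHom ℂ)) = Int.castRingHom ℂ from
        Subsingleton.elim _ _] at h2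
      exact h2.symm
    have hconj : (starRingEnd ℂ) z - 1 = (starRingEnd ℂ) (z - 1) := by
      rw [map_sub, map_one]
    have hargc : ((starRingEnd ℂ) z - 1).arg = -((z - 1).arg) := by
      rw [hconj, Complex.arg_conj, if_neg (by linarith [Real.pi_pos])]
    apply no_root_upper n hn f hdeg han k hk1 hkn hneg hpos hex hf1 ((starRingEnd ℂ) z) hzc
    · rw [hargc]; linarith
    · rw [hargc]
      rw [abs_of_neg hneg'] at hcon
      linarith
  · -- real case
    obtain ⟨hre0, him0⟩ := Complex.arg_eq_zero_iff.mp hzero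
    have hz1 : z ≠ 1 := by
      intro h
      rw [h, Polynomial.eval_one_map] at hz
      have h3 : ((f.eval 1 : ℤ) : ℂ) = 0 := by simpa using hz
      have : f.eval 1 = 0 := by exact_mod_cast h3
      omega
    have hre1 : 1 < z.re := by
      rcases lt_or_eq_of_le hre0 with h | h
      · have : (z - 1).re = z.re - 1 := by simp [Complex.sub_re]
        rw [this] at h; linarith
      · exfalso
        apply hz1
        apply Complex.ext
        · have : (z - 1).re = z.re - 1 := by simp [Complex.sub_re]
          rw [this] at h
          simp; linarith
        · have : (z - 1).im = z.im := by simp [Complex.sub_im]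
          rw [this] at him0
          simpa using him0
    have hzeq : z = ((z.re : ℝ) : ℂ) := by
      apply Complex.ext
      · simp
      · have : (z - 1).im = z.im := by simp [Complex.sub_im]
        rw [this] at him0
        simpa using him0
    have hpos' := real_eval_pos n hn f hdeg han k hk1 hkn hneg hpos hex hf1 z.re hre1
    have hcast : (f.map (Int.castRingHom ℂ)).eval ((z.re : ℝ) : ℂ)
        = (((f.map (Int.castRingHom ℝ)).eval z.re : ℝ) : ℂ) := by
      rw [Polynomial.eval_map, Polynomial.eval_map]
      have h2 := Polynomial.hom_eval₂ f (Int.castRingHom ℝ) Complex.ofRealHom z.re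
      rw [show (Complex.ofRealHom.comp (Int.castRingHom ℝ)) = Int.castRingHom ℂ from
        Subsingleton.elim _ _] at h2
      exact h2.symm
    rw [hzeq, hcast] at hz
    have : (f.map (Int.castRingHom ℝ)).eval z.re = 0 := by exact_mod_cast hz
    linarith
  · apply no_root_upper n hn f hdeg han k hk1 hkn hneg hpos hex hf1 z hz hpos'
    rw [abs_of_pos hpos'] at hcon
    exact hcon

/-- every root is at distance more than 1 from m -/
lemma dist_gt (m : ℤ) (hm : 1 + 1 / Real.sin (Real.pi / n) < (m : ℝ))
    (z : ℂ) (hz : (f.map (Int.castRingHom ℂ)).eval z = 0) :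
    1 < ‖(m : ℂ) - z‖ := by
  have hkey := key_arg n hn f hdeg han k hk1 hkn hneg hpos hex hf1 z hz
  have hnR : (2:ℝ) ≤ (n:ℝ) := by exact_mod_cast hn
  have hpi := Real.pi_pos
  set θ := Real.pi / n with hθdef
  have hθpos : 0 < θ := by positivity
  have hθ2 : θ ≤ Real.pi / 2 :=
    div_le_div_of_nonneg_left (le_of_lt hpi) (by norm_num) hnR
  have hs : 0 < Real.sin θ := Real.sin_pos_of_pos_of_lt_pi hθpos (by linarith)
  have hc : 0 ≤ Real.cos θ := Real.cos_nonneg_of_mem_Icc ⟨by linarith, hθ2⟩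
  have hm1 : 1 < ((m:ℝ) - 1) * Real.sin θ := by
    rw [← div_lt_iff₀ hs]
    linarith
  have hm0 : 0 < (m:ℝ) - 1 := by
    have hsle : Real.sin θ ≤ 1 := Real.sin_le_one θ
    nlinarith
  have hz1 : z - 1 ≠ 0 := by
    intro h
    rw [h, Complex.arg_zero] at hkey
    simp at hkey
    linarith
  have habs1 : 0 < ‖z - 1‖ := norm_pos_iff.mpr hz1
  set ρ := ‖z - 1‖ with hρ
  have hcosb : Real.cos ((z-1).arg) ≤ Real.cos θ := by
    rw [← Real.cos_abs]
    exact Real.cos_le_cos_of_nonneg_of_le_pi (le_of_lt hθpos) (Complex.abs_arg_le_pi _) hkey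
  have hreb : (z - 1).re ≤ ρ * Real.cos θ := by
    have h := Complex.cos_arg hz1
    have hre : (z - 1).re = ρ * Real.cos ((z-1).arg) := by
      rw [h, hρ, mul_comm, div_mul_cancel₀ _ (ne_of_gt habs1)]
    rw [hre]
    exact mul_le_mul_of_nonneg_left hcosb (le_of_lt habs1)
  have hρ2 : ρ ^ 2 = (z - 1).re ^ 2 + (z - 1).im ^ 2 := by
    rw [hρ, Complex.sq_norm, Complex.normSq_apply]; ring
  have habs2 : (‖(m : ℂ) - z‖) ^ 2 = ((m:ℝ) - z.re) ^ 2 + z.im ^ 2 := by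
    rw [Complex.sq_norm, Complex.normSq_apply]
    simp [Complex.sub_re, Complex.sub_im]
    ring
  have hrez : (z - 1).re = z.re - 1 := by simp [Complex.sub_re]
  have himz : (z - 1).im = z.im := by simp [Complex.sub_im]
  rw [hrez] at hreb hρ2
  rw [himz] at hρ2
  have hsq : Real.sin θ ^ 2 + Real.cos θ ^ 2 = 1 := Real.sin_sq_add_cos_sq θ
  have hgoal2 : 1 < (‖(m : ℂ) - z‖) ^ 2 := by
    rw [habs2]
    have hsq2 : ((m:ℝ)-1)^2 * (Real.sin θ^2 + Real.cos θ^2) = ((m:ℝ)-1)^2 := by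
      rw [hsq, mul_one]
    nlinarith [sq_nonneg (((m:ℝ) - 1) * Real.cos θ - ρ), sq_nonneg (((m:ℝ) - 1) * Real.sin θ - 1),
      hm1, hρ2, hsq2,
      mul_le_mul_of_nonneg_left hreb (by linarith : (0:ℝ) ≤ 2 * ((m:ℝ) - 1))]
  nlinarith [norm_nonneg ((m : ℂ) - z)]

/-- nonconstant integer divisors have large absolute value at m -/
lemma divisor_eval (m : ℤ) (hm : 1 + 1 / Real.sin (Real.pi / n) < (m : ℝ))
    (g : Polynomial ℤ) (hgd : g ∣ f) (hg1 : 1 ≤ g.natDegree) :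
    1 < |g.eval m| := by
  have hf0 : f ≠ 0 := fun h => by rw [h] at hf1; simp at hf1
  have hg0 : g ≠ 0 := by
    intro h
    rw [h] at hgd
    exact hf0 (zero_dvd_iff.mp hgd)
  set G := g.map (Int.castRingHom ℂ) with hG
  have hinj : Function.Injective (Int.castRingHom ℂ) := Int.cast_injective
  have hG0 : G ≠ 0 := by
    rw [hG, Ne, Polynomial.map_eq_zero_iff hinj]
    exact hg0
  have hGdeg : G.natDegree = g.natDegree := Polynomial.natDegree_map_eq_of_injective hinj g
  have hsplits : Polynomial.Splits G := IsAlgClosed.splits G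
  have hcard : Multiset.card G.roots = G.natDegree := Polynomial.splits_iff_card_roots.mp hsplits
  have hfac := Polynomial.C_leadingCoeff_mul_prod_multiset_X_sub_C hcard
  have heval : G.eval (m : ℂ)
      = G.leadingCoeff * (G.roots.map (fun a => (m : ℂ) - a)).prod := by
    conv_lhs => rw [← hfac]
    rw [Polynomial.eval_mul, Polynomial.eval_C, Polynomial.eval_multiset_prod,
      Multiset.map_map]
    congr 1
    exact congrArg Multiset.prod (Multiset.map_congr rfl fun a _ => by
      simp)
  have habs : ‖G.eval (m : ℂ)‖
      = ‖G.leadingCoeff‖ * (G.roots.map (fun a => ‖(m : ℂ) - a‖)).prod := by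
    rw [heval, norm_mul, show ‖(G.roots.map (fun a => (m : ℂ) - a)).prod‖
        = normHom (G.roots.map (fun a => (m : ℂ) - a)).prod from rfl, ← Multiset.prod_hom]
    · rw [Multiset.map_map]
      rfl
  have hroots : ∀ a ∈ G.roots, 1 < ‖(m : ℂ) - a‖ := by
    intro a ha
    have haroot : G.eval a = 0 := (Polynomial.mem_roots hG0).mp ha
    obtain ⟨h, hh⟩ := hgd
    have hzf : (f.map (Int.castRingHom ℂ)).eval a = 0 := by
      rw [hh, Polynomial.map_mul, Polynomial.eval_mul, ← hG, haroot, zero_mul]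
    exact dist_gt n hn f hdeg han k hk1 hkn hneg hpos hex hf1 m hm a hzf
  have hlc : 1 ≤ ‖G.leadingCoeff‖ := by
    have h1 : G.leadingCoeff = ((g.leadingCoeff : ℤ) : ℂ) := by
      rw [Polynomial.leadingCoeff, hGdeg, hG, Polynomial.coeff_map]
      rfl
    rw [h1]
    rw [Complex.norm_intCast]
    have : g.leadingCoeff ≠ 0 := Polynomial.leadingCoeff_ne_zero.mpr hg0
    have h2 : 1 ≤ |g.leadingCoeff| := Int.one_le_abs this
    calc (1:ℝ) = ((1:ℤ):ℝ) := by norm_num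
    _ ≤ ((|g.leadingCoeff| : ℤ) : ℝ) := by exact_mod_cast h2
    _ = |((g.leadingCoeff : ℤ) : ℝ)| := by push_cast; ring
  have hcard1 : 1 ≤ Multiset.card G.roots := by
    rw [hcard, hGdeg]; exact hg1
  have hprod : 1 < (G.roots.map (fun a => ‖(m : ℂ) - a‖)).prod := by
    obtain ⟨a0, ha0⟩ := Multiset.card_pos_iff_exists_mem.mp (lt_of_lt_of_le zero_lt_one hcard1)
    obtain ⟨s, hs⟩ := Multiset.exists_cons_of_mem ha0
    rw [hs, Multiset.map_cons, Multiset.prod_cons]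
    have hrest : 1 ≤ (s.map (fun a => ‖(m : ℂ) - a‖)).prod := by
      apply Multiset.one_le_prod
      intro x hx
      obtain ⟨a, ha, rfl⟩ := Multiset.mem_map.mp hx
      have : a ∈ G.roots := by rw [hs]; exact Multiset.mem_cons_of_mem ha
      linarith [hroots a this]
    have h0 := hroots a0 ha0
    nlinarith
  have hGev : G.eval (m : ℂ) = ((g.eval m : ℤ) : ℂ) := by
    rw [hG]
    simp [Polynomial.eval_map, Polynomial.eval₂_at_apply]
  have hfinal : 1 < ‖((g.eval m : ℤ) : ℂ)‖ := by
    rw [← hGev, habs]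
    nlinarith
  rw [Complex.norm_intCast] at hfinal
  exact_mod_cast (by push_cast at hfinal ⊢; exact hfinal : (1:ℝ) < ((|g.eval m| : ℤ) : ℝ))

end Main
end StmtAux


theorem stmt_15 (n : ℕ) (hn : 2 ≤ n) (f : Polynomial ℤ) (hdeg : f.natDegree = n)
    (han : 0 < f.coeff n)
    (k : ℕ) (hk1 : 1 ≤ k) (hkn : k ≤ n)
    (hneg : ∀ i < k, f.coeff i ≤ 0)
    (hpos : ∀ i, k ≤ i → 0 ≤ f.coeff i)
    (hex : ∃ i < k, f.coeff i < 0)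
    (hf1 : 0 < f.eval 1)
    (m : ℤ) (hm : 1 + 1 / Real.sin (Real.pi / n) < (m : ℝ))
    (p : ℕ) (hp : p.Prime) (hfm : f.eval m = (p : ℤ)) :
    Irreducible (f.map (Int.castRingHom ℚ)) := by
  have hfprime : Prime (p : ℤ) := Int.prime_iff_natAbs_prime.mpr (by simpa using hp)
  have hf0 : f ≠ 0 := by intro h; rw [h] at hf1; simp at hf1
  have hdvd_eval : ∀ g : Polynomial ℤ, g ∣ f → 1 ≤ g.natDegree → 1 < |g.eval m| :=
    fun g => divisor_eval n hn f hdeg han k hk1 hkn hneg hpos hex hf1 m hm g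
  have hirr : Irreducible f := by
    constructor
    · intro hu
      have h0 := Polynomial.natDegree_eq_zero_of_isUnit hu
      omega
    · intro g h hgh
      have he : g.eval m * h.eval m = (p : ℤ) := by
        rw [← hfm, hgh, Polynomial.eval_mul]
      have hgdvd : g ∣ f := ⟨h, hgh⟩
      have hhdvd : h ∣ f := ⟨g, by rw [hgh, mul_comm]⟩
      rcases hfprime.irreducible.isUnit_or_isUnit he.symm with hu | hu
      · left
        have habs : |g.eval m| = 1 := by
          rcases Int.isUnit_iff.mp hu with h1 | h1 <;> rw [h1] <;> norm_num
        have hdeg0 : g.natDegree = 0 := by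
          by_contra hc
          have := hdvd_eval g hgdvd (by omega)
          omega
        obtain ⟨c, hc⟩ := Polynomial.natDegree_eq_zero.mp hdeg0
        rw [← hc, Polynomial.isUnit_C]
        have hcc : g.eval m = c := by rw [← hc]; simp
        rw [hcc] at hu
        exact hu
      · right
        have habs : |h.eval m| = 1 := by
          rcases Int.isUnit_iff.mp hu with h1 | h1 <;> rw [h1] <;> norm_num
        have hdeg0 : h.natDegree = 0 := by
          by_contra hc
          have := hdvd_eval h hhdvd (by omega)
          omega
        obtain ⟨c, hc⟩ := Polynomial.natDegree_eq_zero.mp hdeg0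
        rw [← hc, Polynomial.isUnit_C]
        have hcc : h.eval m = c := by rw [← hc]; simp
        rw [hcc] at hu
        exact hu
  have hprim : f.IsPrimitive := by
    intro r hr
    by_contra hru
    obtain ⟨g, hg⟩ := hr
    have hg0 : g ≠ 0 := by
      intro h
      rw [h, mul_zero] at hg
      exact hf0 hg
    have hr0 : r ≠ 0 := by
      intro h
      rw [h, Polynomial.C_0, zero_mul] at hg
      exact hf0 hg
    have hevalg : r * g.eval m = (p : ℤ) := by
      rw [← hfm, hg, Polynomial.eval_mul, Polynomial.eval_C]
    rcases hfprime.irreducible.isUnit_or_isUnit hevalg.symm with hu | hu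
    · exact hru hu
    · have hgdvd : g ∣ f := ⟨Polynomial.C r, by rw [hg, mul_comm]⟩
      have hgdeg : g.natDegree = n := by
        have h1 : f.natDegree = g.natDegree := by
          rw [hg, Polynomial.natDegree_mul (by simpa using hr0) hg0,
            Polynomial.natDegree_C]
          omega
        omega
      have hgt := hdvd_eval g hgdvd (by omega)
      have habs : |g.eval m| = 1 := by
        rcases Int.isUnit_iff.mp hu with h1 | h1 <;> rw [h1] <;> norm_num
      omega
  exact (Polynomial.IsPrimitive.Int.irreducible_iff_irreducible_map_cast hprim).mp hirr
end

section
/- Let f(X) be a non-constant polynomial with integer coefficients which has no complex roots in the sector S_{v,θ}, where v is a real number and 0 < θ ≤ π/2. Suppose f(m) = p^k·q and f'(m) = ±p^ℓ·r, where p is a prime number, k, ℓ, q, r and m are positive integers with p dividing neither q nor r, and set s = min(ℓ, k/2) (a real number). If m > v + p^s·q / sin θ, then f is irreducible over ℚ. Moreover, if f has no rational roots, the same conclusion holds under the weaker assumption m > v + sqrt(p^s·q) / sin θ. -/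
open Polynomial

lemma sector_dist (v θ u : ℝ) (hθ : 0 < θ) (hθ' : θ ≤ Real.pi / 2) (hu : v < u)
    (z : ℂ) (hz : z ∉ sector v θ) :
    (u - v) * Real.sin θ ≤ ‖(u : ℂ) - z‖ := by
  have hcos : 0 ≤ Real.cos θ := Real.cos_nonneg_of_mem_Icc ⟨by linarith [Real.pi_pos], hθ'⟩
  have hsin : 0 ≤ Real.sin θ := Real.sin_nonneg_of_nonneg_of_le_pi hθ.le (by linarith [Real.pi_pos])
  set w : ℂ := z - (v : ℂ) with hw
  have hre : w.re ≤ ‖w‖ * Real.cos θ := by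
    by_cases h0 : z = (v : ℂ)
    · simp [hw, h0]
    · have harg : θ ≤ |Complex.arg w| := by
        simp only [sector, Set.mem_setOf_eq, not_and, not_lt] at hz
        exact hz h0
      have hw0 : w ≠ 0 := sub_ne_zero.mpr h0
      have hcosarg : Real.cos (Complex.arg w) = w.re / ‖w‖ := Complex.cos_arg hw0
      have hle : Real.cos |Complex.arg w| ≤ Real.cos θ :=
        Real.cos_le_cos_of_nonneg_of_le_pi hθ.le (Complex.abs_arg_le_pi w) harg
      rw [Real.cos_abs] at hle
      have habs : 0 < ‖w‖ := norm_pos_iff.mpr hw0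
      have : w.re = ‖w‖ * Real.cos (Complex.arg w) := by
        rw [hcosarg]; field_simp
      rw [this]
      exact mul_le_mul_of_nonneg_left hle habs.le
  have hsq : ((u - v) * Real.sin θ) ^ 2 ≤ (‖(u : ℂ) - z‖) ^ 2 := by
    have h1 : (‖(u : ℂ) - z‖) ^ 2 = (u - v - w.re) ^ 2 + w.im ^ 2 := by
      rw [Complex.sq_norm, Complex.normSq_apply]
      simp [hw, Complex.sub_re, Complex.sub_im]
      ring
    have h2 : (‖w‖) ^ 2 = w.re ^ 2 + w.im ^ 2 := by
      rw [Complex.sq_norm, Complex.normSq_apply]; ring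
    have h3 : 0 ≤ ‖w‖ := norm_nonneg w
    have h4 : Real.sin θ ^ 2 + Real.cos θ ^ 2 = 1 := Real.sin_sq_add_cos_sq θ
    rw [h1]
    nlinarith [sq_nonneg ((u - v) * Real.cos θ - ‖w‖), sq_nonneg (u - v),
      mul_le_mul_of_nonneg_left hre (le_of_lt (by linarith : (0:ℝ) < u - v))]
  have hL : 0 ≤ (u - v) * Real.sin θ := mul_nonneg (by linarith) hsin
  calc (u - v) * Real.sin θ = Real.sqrt (((u - v) * Real.sin θ) ^ 2) := (Real.sqrt_sq hL).symm
    _ ≤ Real.sqrt ((‖(u : ℂ) - z‖) ^ 2) := Real.sqrt_le_sqrt hsq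
    _ = ‖(u : ℂ) - z‖ := Real.sqrt_sq (norm_nonneg _)

open Polynomial in
lemma multiset_prod_ge {B : ℝ} (hB : 0 ≤ B) (s : Multiset ℝ) (h : ∀ x ∈ s, B ≤ x) :
    B ^ Multiset.card s ≤ s.prod := by
  induction s using Multiset.induction with
  | empty => simp
  | cons a s ih =>
    simp only [Multiset.card_cons, Multiset.prod_cons, pow_succ]
    have hBa : B ≤ a := h a (Multiset.mem_cons_self a s)
    have hs : ∀ x ∈ s, B ≤ x := fun x hx => h x (Multiset.mem_cons_of_mem hx)
    calc B ^ Multiset.card s * B ≤ s.prod * a := by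
          apply mul_le_mul (ih hs) hBa hB
          exact Multiset.prod_nonneg fun x hx => le_trans hB (hs x hx)
      _ = a * s.prod := mul_comm _ _

open Polynomial in
lemma factor_lower (f g : ℤ[X]) (hf0 : f ≠ 0) (hgf : g ∣ f)
    (v θ : ℝ) (hθ : 0 < θ) (hθ' : θ ≤ Real.pi / 2)
    (hroots : ∀ z ∈ sector v θ, Polynomial.aeval z f ≠ 0)
    (u : ℝ) (hu : v < u) (n : ℤ) (hn : (n : ℝ) = u) :
    ((u - v) * Real.sin θ) ^ g.natDegree ≤ |((g.eval n : ℤ) : ℝ)| := by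
  have hg0 : g ≠ 0 := by rintro rfl; exact hf0 (zero_dvd_iff.mp hgf)
  set G : ℂ[X] := g.map (Int.castRingHom ℂ) with hG
  have hinj : Function.Injective (Int.castRingHom ℂ) := Int.cast_injective
  have hG0 : G ≠ 0 := (Polynomial.map_ne_zero_iff hinj).mpr hg0
  have hsplit : G.Splits := IsAlgClosed.splits G
  have heq : G = C G.leadingCoeff * (G.roots.map fun a => X - C a).prod :=
    hsplit.eq_prod_roots
  have hcard : Multiset.card G.roots = g.natDegree := by
    rw [(splits_iff_card_roots).mp hsplit]
    exact natDegree_map_eq_of_injective hinj g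
  -- evaluation
  have hevalG : G.eval ((u : ℂ)) = ((g.eval n : ℤ) : ℂ) := by
    rw [hG, eval_map, ← hn]
    have : ((n : ℝ) : ℂ) = ((Int.castRingHom ℂ) n) := by simp
    rw [this, eval₂_at_apply]
    simp
  have habs : ‖G.eval (u : ℂ)‖ = |((g.eval n : ℤ) : ℝ)| := by
    rw [hevalG]
    simpa using Complex.norm_intCast (g.eval n)
  set B := (u - v) * Real.sin θ with hBdef
  have hsin : 0 ≤ Real.sin θ := Real.sin_nonneg_of_nonneg_of_le_pi hθ.le (by linarith [Real.pi_pos])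
  have hB : 0 ≤ B := mul_nonneg (by linarith) hsin
  -- each root outside sector
  have hroot : ∀ a ∈ G.roots, B ≤ ‖(u : ℂ) - a‖ := by
    intro a ha
    have hroot : G.eval a = 0 := (mem_roots hG0).mp ha
    have haev : Polynomial.aeval a g = 0 := by
      rw [Polynomial.aeval_def, eval₂_eq_eval_map]
      have : algebraMap ℤ ℂ = Int.castRingHom ℂ := by ext; simp
      rw [this]; exact hroot
    have hafev : Polynomial.aeval a f = 0 := by
      obtain ⟨t, rfl⟩ := hgf
      simp [haev]
    have hnot : a ∉ sector v θ := fun hmem => hroots a hmem hafev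
    exact sector_dist v θ u hθ hθ' hu a hnot
  -- leading coeff
  have hlc : (1 : ℝ) ≤ ‖G.leadingCoeff‖ := by
    have : G.leadingCoeff = ((g.leadingCoeff : ℤ) : ℂ) := by
      rw [hG, leadingCoeff_map_of_injective hinj]; simp
    rw [this]
    rw [Complex.norm_intCast]
    have : g.leadingCoeff ≠ 0 := leadingCoeff_ne_zero.mpr hg0
    have h1 : (1 : ℤ) ≤ |g.leadingCoeff| := Int.one_le_abs this
    calc (1:ℝ) ≤ (|g.leadingCoeff| : ℝ) := by exact_mod_cast h1
      _ = |((g.leadingCoeff : ℤ) : ℝ)| := by push_cast; ring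
  -- combine
  have hprod : B ^ g.natDegree ≤ ((G.roots.map fun a => ‖(u : ℂ) - a‖).prod) := by
    rw [← hcard]
    have := multiset_prod_ge hB (G.roots.map fun a => ‖(u : ℂ) - a‖)
      (by intro x hx
          obtain ⟨a, ha, rfl⟩ := Multiset.mem_map.mp hx
          exact hroot a ha)
    simpa using this
  have hev : ‖G.eval (u : ℂ)‖ =
      ‖G.leadingCoeff‖ * ((G.roots.map fun a => ‖(u : ℂ) - a‖).prod) := by
    conv_lhs => rw [heq]
    rw [eval_mul, eval_C, norm_mul, eval_multiset_prod]
    congr 1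
    rw [show ∀ s : Multiset ℂ, ‖s.prod‖ = (s.map norm).prod from fun s => map_multiset_prod (normHom (α := ℂ)) s]
    simp only [Multiset.map_map, Function.comp]
    congr 1
    apply Multiset.map_congr rfl
    intro a ha
    simp
  rw [← habs, hev]
  have hprodnn : 0 ≤ ((G.roots.map fun a => ‖(u : ℂ) - a‖).prod) :=
    Multiset.prod_nonneg (by intro x hx; obtain ⟨a, ha, rfl⟩ := Multiset.mem_map.mp hx
                             exact norm_nonneg _)
  calc B ^ g.natDegree ≤ (G.roots.map fun a => ‖(u : ℂ) - a‖).prod := hprod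
    _ = 1 * _ := (one_mul _).symm
    _ ≤ ‖G.leadingCoeff‖ * _ := by
        apply mul_le_mul_of_nonneg_right hlc hprodnn

-- A ∣ p^k*q, p prime not dividing q ⇒ A ≤ p^(v_p A) * q
lemma nat_bound {p k q A : ℕ} (hp : p.Prime) (hq : 0 < q) (hA : A ≠ 0)
    (hpq : ¬ p ∣ q) (hdvd : A ∣ p ^ k * q) :
    A ≤ p ^ (A.factorization p) * q := by
  set a := A.factorization p
  set u := ordCompl[p] A with hu
  have hself : p ^ a * u = A := Nat.ordProj_mul_ordCompl_eq_self A p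
  have hudvd : u ∣ p ^ k * q := dvd_trans (Nat.ordCompl_dvd A p) hdvd
  have hcop : Nat.Coprime p u := Nat.coprime_ordCompl hp hA
  have hcop' : Nat.Coprime u (p ^ k) := (Nat.Coprime.pow_right k hcop.symm)
  have huq : u ∣ q := hcop'.dvd_of_dvd_mul_left hudvd
  have hule : u ≤ q := Nat.le_of_dvd hq huq
  calc A = p ^ a * u := hself.symm
    _ ≤ p ^ a * q := Nat.mul_le_mul_left _ hule

lemma prim_nonunit_deg (g : ℤ[X]) (h1 : g.content = 1) (h2 : ¬ IsUnit g) :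
    0 < g.natDegree := by
  by_contra h
  push_neg at h
  have hdeg : g.natDegree = 0 := Nat.le_zero.mp h
  have : g = C (g.coeff 0) := Polynomial.eq_C_of_natDegree_eq_zero hdeg
  rw [this] at h1 h2
  rw [Polynomial.content_C] at h1
  exact h2 (Polynomial.isUnit_C.mpr (normalize_eq_one.mp h1))

/-- Key extraction: if `f.map` is not irreducible, there is a factor `g` of `f`
of positive degree whose value at `m` is small `p`-adically. -/
lemma exists_small_factor (f : ℤ[X]) (hf : 0 < f.natDegree)
    (p : ℕ) (hp : p.Prime) (k l q r : ℕ) (m : ℤ)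
    (hq : 0 < q) (hr : 0 < r)
    (hpq : ¬ (p : ℤ) ∣ (q : ℤ)) (hpr : ¬ (p : ℤ) ∣ (r : ℤ))
    (hfm : f.eval m = (p : ℤ) ^ k * q)
    (hfm' : f.derivative.eval m = (p : ℤ) ^ l * r ∨
            f.derivative.eval m = -((p : ℤ) ^ l * r))
    (hIrr : ¬ Irreducible (f.map (Int.castRingHom ℚ))) :
    ∃ g : ℤ[X], ∃ a : ℕ, g ∣ f ∧ 0 < g.natDegree ∧ a ≤ l ∧ 2 * a ≤ k ∧
      (g.eval m).natAbs ≤ p ^ a * q := by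
  have hf0 : f ≠ 0 := fun h => by simp [h] at hf
  have hpq' : ¬ p ∣ q := fun h => hpq (Int.natCast_dvd_natCast.mpr h)
  have hpr' : ¬ p ∣ r := fun h => hpr (Int.natCast_dvd_natCast.mpr h)
  set c := f.content with hc
  set f₁ := f.primPart with hf₁
  have hfc : f = C (c : ℤ) * f₁ := f.eq_C_content_mul_primPart
  have hprim : f₁.IsPrimitive := f.isPrimitive_primPart
  have hmapassoc : Associated (f₁.map (Int.castRingHom ℚ)) (f.map (Int.castRingHom ℚ)) := by
    have hc0 : (c : ℚ) ≠ 0 := by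
      simp only [Int.cast_ne_zero]
      exact fun h => hf0 (Polynomial.content_eq_zero_iff.mp h)
    have hunit : IsUnit (C (c : ℚ)) := Polynomial.isUnit_C.mpr (isUnit_iff_ne_zero.mpr hc0)
    have hmf : f.map (Int.castRingHom ℚ) = C ((c : ℤ) : ℚ) * f₁.map (Int.castRingHom ℚ) := by
      conv_lhs => rw [hfc]
      rw [Polynomial.map_mul, Polynomial.map_C]
      norm_num
    rw [hmf]
    exact (associated_unit_mul_left _ _ hunit).symm
  have hIrr1 : ¬ Irreducible f₁ := by
    intro h
    exact hIrr (hmapassoc.irreducible ((Polynomial.IsPrimitive.Int.irreducible_iff_irreducible_map_cast hprim).mp h))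
  have hf₁deg : f₁.natDegree = f.natDegree := f.natDegree_primPart
  have hnu : ¬ IsUnit f₁ := by
    intro h
    have := Polynomial.natDegree_eq_zero_of_isUnit h
    omega
  obtain ⟨g, h, hgh, hgu, hhu⟩ : ∃ g h : ℤ[X], f₁ = g * h ∧ ¬ IsUnit g ∧ ¬ IsUnit h := by
    by_contra hcon
    push_neg at hcon
    exact hIrr1 ⟨hnu, fun a b hab => or_iff_not_imp_left.mpr (hcon a b hab)⟩
  -- both factors have positive degree
  have hgh0 : f₁ ≠ 0 := f.primPart_ne_zero
  have hcontent : g.content * h.content = 1 := by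
    rw [← Polynomial.content_mul, ← hgh]
    exact hprim.content_eq_one
  have hgc : g.content = 1 := by
    have hu : IsUnit g.content := IsUnit.of_mul_eq_one _ hcontent
    rw [← Polynomial.normalize_content]
    exact normalize_eq_one.mpr hu
  have hhc : h.content = 1 := by
    have hu : IsUnit h.content := IsUnit.of_mul_eq_one _ (by rw [mul_comm] at hcontent; exact hcontent)
    rw [← Polynomial.normalize_content]
    exact normalize_eq_one.mpr hu
  have hgdeg : 0 < g.natDegree := prim_nonunit_deg g hgc hgu
  have hhdeg : 0 < h.natDegree := prim_nonunit_deg h hhc hhu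
  have hf₁dvd : f₁ ∣ f := ⟨C c, by rw [mul_comm]; exact hfc⟩
  have hgdvdf₁ : g ∣ f₁ := ⟨h, hgh⟩
  have hhdvdf₁ : h ∣ f₁ := ⟨g, by rw [mul_comm]; exact hgh⟩
  have hgdvdf : g ∣ f := dvd_trans hgdvdf₁ hf₁dvd
  have hhdvdf : h ∣ f := dvd_trans hhdvdf₁ hf₁dvd
  -- evaluations
  have hfm0 : f.eval m ≠ 0 := by
    rw [hfm]
    have h1 : ((p:ℤ)) ^ k ≠ 0 := pow_ne_zero _ (by exact_mod_cast hp.pos.ne')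
    have h2 : (q:ℤ) ≠ 0 := by exact_mod_cast hq.ne'
    exact mul_ne_zero h1 h2
  have hE : f.eval m = c * (g.eval m * h.eval m) := by
    conv_lhs => rw [hfc]
    rw [Polynomial.eval_mul, Polynomial.eval_C, hgh, Polynomial.eval_mul]
  have hgm0 : g.eval m ≠ 0 := by
    intro h0; rw [h0] at hE; simp at hE; exact hfm0 (by rw [hE])
  have hhm0 : h.eval m ≠ 0 := by
    intro h0; rw [h0] at hE; simp at hE; exact hfm0 (by rw [hE])
  set A := (g.eval m).natAbs with hA
  set B := (h.eval m).natAbs with hB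
  have hA0 : A ≠ 0 := Int.natAbs_ne_zero.mpr hgm0
  have hB0 : B ≠ 0 := Int.natAbs_ne_zero.mpr hhm0
  set a := A.factorization p with ha
  set b := B.factorization p with hb
  -- divisibility of product
  have hdvdZ : g.eval m * h.eval m ∣ f.eval m := ⟨c, by rw [hE]; ring⟩
  have hfmabs : (f.eval m).natAbs = p ^ k * q := by
    rw [hfm]
    have : ((p:ℤ))^k * (q:ℤ) = ((p ^ k * q : ℕ) : ℤ) := by push_cast; ring
    rw [this, Int.natAbs_natCast]
  have hpkq0 : p ^ k * q ≠ 0 := Nat.mul_ne_zero (pow_ne_zero _ hp.pos.ne') hq.ne'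
  have hABdvd : A * B ∣ p ^ k * q := by
    rw [← hfmabs, ← Int.natAbs_mul]
    exact Int.natAbs_dvd_natAbs.mpr hdvdZ
  have hApkq : A ∣ p ^ k * q := dvd_trans (Dvd.intro _ rfl) hABdvd
  have hBpkq : B ∣ p ^ k * q := dvd_trans (Dvd.intro_left _ rfl) hABdvd
  have hpq' : ¬ p ∣ q := fun hh => hpq (Int.natCast_dvd_natCast.mpr hh)
  have hpr' : ¬ p ∣ r := fun hh => hpr (Int.natCast_dvd_natCast.mpr hh)
  have hfacpkq : (p ^ k * q).factorization p = k := by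
    rw [Nat.factorization_mul (pow_ne_zero k hp.pos.ne') hq.ne']
    simp [hp.factorization_pow, Nat.factorization_eq_zero_of_not_dvd hpq']
  -- a + b ≤ k
  have habk : a + b ≤ k := by
    have h1 : p ^ (a + b) ∣ A * B := by
      rw [pow_add]
      exact mul_dvd_mul (Nat.ordProj_dvd A p) (Nat.ordProj_dvd B p)
    have h2 : p ^ (a + b) ∣ p ^ k * q := dvd_trans h1 hABdvd
    have := (Nat.Prime.pow_dvd_iff_le_factorization hp hpkq0).mp h2
    rwa [hfacpkq] at this
  -- min a b ≤ l
  have hminl : min a b ≤ l := by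
    have hpa : (p : ℤ) ^ (min a b) ∣ g.eval m := by
      have h1 : p ^ (min a b) ∣ A := dvd_trans (pow_dvd_pow p (min_le_left a b)) (Nat.ordProj_dvd A p)
      have := Int.natCast_dvd_natCast.mpr h1
      push_cast at this
      exact (Int.dvd_natAbs.mp (by exact_mod_cast this))
    have hpb : (p : ℤ) ^ (min a b) ∣ h.eval m := by
      have h1 : p ^ (min a b) ∣ B := dvd_trans (pow_dvd_pow p (min_le_right a b)) (Nat.ordProj_dvd B p)
      have := Int.natCast_dvd_natCast.mpr h1
      push_cast at this
      exact (Int.dvd_natAbs.mp (by exact_mod_cast this))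
    have hder : f.derivative = C c * (derivative g * h + g * derivative h) := by
      conv_lhs => rw [hfc]
      rw [Polynomial.derivative_C_mul, hgh, Polynomial.derivative_mul]
    have hdvdder : (p : ℤ) ^ (min a b) ∣ f.derivative.eval m := by
      rw [hder]
      simp only [Polynomial.eval_mul, Polynomial.eval_C, Polynomial.eval_add]
      exact Dvd.dvd.mul_left (dvd_add (Dvd.dvd.mul_left hpb _) (Dvd.dvd.mul_right hpa _)) c
    have hderabs : (f.derivative.eval m).natAbs = p ^ l * r := by
      have hcast : ((p:ℤ))^l * (r:ℤ) = ((p ^ l * r : ℕ) : ℤ) := by push_cast; ring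
      rcases hfm' with hh | hh
      · rw [hh, hcast, Int.natAbs_natCast]
      · rw [hh, Int.natAbs_neg, hcast, Int.natAbs_natCast]
    have hplr0 : p ^ l * r ≠ 0 := Nat.mul_ne_zero (pow_ne_zero _ hp.pos.ne') hr.ne'
    have hdvdnat : p ^ (min a b) ∣ p ^ l * r := by
      rw [← hderabs]
      have := Int.natAbs_dvd_natAbs.mpr hdvdder
      rwa [Int.natAbs_pow, Int.natAbs_natCast] at this
    have := (Nat.Prime.pow_dvd_iff_le_factorization hp hplr0).mp hdvdnat
    rw [Nat.factorization_mul (pow_ne_zero l hp.pos.ne') hr.ne'] at this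
    simpa [hp.factorization_pow, Nat.factorization_eq_zero_of_not_dvd hpr'] using this
  -- choose the factor with smaller valuation
  rcases le_total a b with hab | hab
  · refine ⟨g, a, hgdvdf, hgdeg, ?_, by omega, nat_bound hp hq hA0 hpq' hApkq⟩
    rw [min_eq_left hab] at hminl; exact hminl
  · refine ⟨h, b, hhdvdf, hhdeg, ?_, by omega, nat_bound hp hq hB0 hpq' hBpkq⟩
    rw [min_eq_right hab] at hminl; exact hminl

theorem stmt_16 (f : Polynomial ℤ) (hf : 0 < f.natDegree)
    (v θ : ℝ) (hθ : 0 < θ) (hθ' : θ ≤ Real.pi / 2)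
    (hroots : ∀ z ∈ sector v θ, Polynomial.aeval z f ≠ 0)
    (p : ℕ) (hp : p.Prime) (k l q r m : ℕ)
    (hk : 0 < k) (hl : 0 < l) (hq : 0 < q) (hr : 0 < r) (hm0 : 0 < m)
    (hpq : ¬ (p : ℤ) ∣ (q : ℤ)) (hpr : ¬ (p : ℤ) ∣ (r : ℤ))
    (hfm : f.eval (m : ℤ) = (p : ℤ) ^ k * q)
    (hfm' : f.derivative.eval (m : ℤ) = (p : ℤ) ^ l * r ∨
            f.derivative.eval (m : ℤ) = -((p : ℤ) ^ l * r)) :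
    (v + (p : ℝ) ^ (min (l : ℝ) ((k : ℝ) / 2)) * (q : ℝ) / Real.sin θ < (m : ℝ) →
        Irreducible (f.map (Int.castRingHom ℚ))) ∧
    ((∀ x : ℚ, Polynomial.aeval x f ≠ 0) →
      v + Real.sqrt ((p : ℝ) ^ (min (l : ℝ) ((k : ℝ) / 2)) * (q : ℝ)) / Real.sin θ < (m : ℝ) →
        Irreducible (f.map (Int.castRingHom ℚ))) := by
  have hf0 : f ≠ 0 := fun h => by simp [h] at hf
  have hθπ : θ < Real.pi := lt_of_le_of_lt hθ' (by linarith [Real.pi_pos])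
  have hsin : 0 < Real.sin θ := Real.sin_pos_of_pos_of_lt_pi hθ hθπ
  set s : ℝ := min (l : ℝ) ((k : ℝ) / 2) with hs
  have hs0 : 0 ≤ s := le_min (by positivity) (by positivity)
  have hp1 : (1 : ℝ) ≤ (p : ℝ) := by exact_mod_cast hp.one_lt.le
  have hP1 : (1 : ℝ) ≤ (p : ℝ) ^ s := Real.one_le_rpow hp1 hs0
  have hq1 : (1 : ℝ) ≤ (q : ℝ) := by exact_mod_cast hq
  set Q : ℝ := (p : ℝ) ^ s * (q : ℝ) with hQdef
  have hQ1 : (1 : ℝ) ≤ Q := by nlinarith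
  have hQ0 : 0 < Q := by linarith
  -- common consequence of non-irreducibility
  have key : ¬ Irreducible (f.map (Int.castRingHom ℚ)) → v < (m : ℝ) →
      ∃ g : ℤ[X], g ∣ f ∧ 0 < g.natDegree ∧
        (((m : ℝ) - v) * Real.sin θ) ^ g.natDegree ≤ Q := by
    intro hIrr hvm
    obtain ⟨g, a, hgf, hd, hal, hak, hAle⟩ :=
      exists_small_factor f hf p hp k l q r (m : ℤ) hq hr hpq hpr hfm hfm' hIrr
    refine ⟨g, hgf, hd, ?_⟩
    have hana := factor_lower f g hf0 hgf v θ hθ hθ' hroots (m : ℝ) hvm (m : ℤ) (by push_cast; ring)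
    have habs_eq : |((g.eval (m : ℤ) : ℤ) : ℝ)| = (((g.eval (m : ℤ)).natAbs : ℕ) : ℝ) := by
      rw [Nat.cast_natAbs]
      push_cast
      ring
    have h1 : (((g.eval (m : ℤ)).natAbs : ℕ) : ℝ) ≤ ((p ^ a * q : ℕ) : ℝ) := by exact_mod_cast hAle
    have h2 : ((p ^ a * q : ℕ) : ℝ) = (p : ℝ) ^ (a : ℕ) * (q : ℝ) := by push_cast; ring
    have h3 : (p : ℝ) ^ (a : ℕ) ≤ (p : ℝ) ^ s := by
      rw [← Real.rpow_natCast (p : ℝ) a]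
      apply Real.rpow_le_rpow_of_exponent_le hp1
      refine le_min ?_ ?_
      · exact_mod_cast hal
      · have : (2 * a : ℝ) ≤ (k : ℝ) := by exact_mod_cast hak
        linarith
    calc (((m : ℝ) - v) * Real.sin θ) ^ g.natDegree ≤ |((g.eval (m : ℤ) : ℤ) : ℝ)| := hana
      _ = (((g.eval (m : ℤ)).natAbs : ℕ) : ℝ) := habs_eq
      _ ≤ (p : ℝ) ^ (a : ℕ) * (q : ℝ) := by rw [← h2]; exact h1
      _ ≤ Q := by
          rw [hQdef]
          exact mul_le_mul_of_nonneg_right h3 (by positivity)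
  constructor
  · intro hm
    by_contra hIrr
    have hvm : v < (m : ℝ) := by
      have h0 : 0 < Q / Real.sin θ := div_pos hQ0 hsin
      linarith
    obtain ⟨g, hgf, hd, hbound⟩ := key hIrr hvm
    set B : ℝ := ((m : ℝ) - v) * Real.sin θ with hBdef
    have hQB : Q < B := by
      rw [hBdef]
      have : Q / Real.sin θ < (m : ℝ) - v := by linarith
      calc Q = Q / Real.sin θ * Real.sin θ := by field_simp
        _ < ((m : ℝ) - v) * Real.sin θ := by
            exact mul_lt_mul_of_pos_right this hsin
    have hB1 : 1 ≤ B := by linarith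
    have : B ≤ B ^ g.natDegree := le_self_pow₀ hB1 hd.ne'
    linarith
  · intro hrat hm
    by_contra hIrr
    have hsq0 : 0 ≤ Real.sqrt Q := Real.sqrt_nonneg Q
    have hsq1 : 1 ≤ Real.sqrt Q := by
      rw [show (1:ℝ) = Real.sqrt 1 by simp]
      exact Real.sqrt_le_sqrt hQ1
    have hvm : v < (m : ℝ) := by
      have h0 : 0 < Real.sqrt Q / Real.sin θ := div_pos (by linarith) hsin
      linarith
    obtain ⟨g, hgf, hd, hbound⟩ := key hIrr hvm
    set B : ℝ := ((m : ℝ) - v) * Real.sin θ with hBdef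
    have hQB : Real.sqrt Q < B := by
      rw [hBdef]
      have : Real.sqrt Q / Real.sin θ < (m : ℝ) - v := by linarith
      calc Real.sqrt Q = Real.sqrt Q / Real.sin θ * Real.sin θ := by field_simp
        _ < ((m : ℝ) - v) * Real.sin θ := mul_lt_mul_of_pos_right this hsin
    have hB1 : 1 ≤ B := by linarith
    rcases Nat.lt_or_ge g.natDegree 2 with hd2 | hd2
    · -- degree 1: rational root
      have hd1 : g.natDegree = 1 := by omega
      have hg0 : g ≠ 0 := fun h => by simp [h] at hd1
      have hc1 : g.coeff 1 ≠ 0 := by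
        have : g.coeff 1 = g.leadingCoeff := by rw [Polynomial.leadingCoeff, hd1]
        rw [this]
        exact Polynomial.leadingCoeff_ne_zero.mpr hg0
      have hc1Q : ((g.coeff 1 : ℤ) : ℚ) ≠ 0 := by exact_mod_cast hc1
      set x : ℚ := -((g.coeff 0 : ℤ) : ℚ) / ((g.coeff 1 : ℤ) : ℚ) with hx
      have hgx : Polynomial.aeval x g = 0 := by
        conv_lhs => rw [Polynomial.eq_X_add_C_of_natDegree_le_one hd1.le]
        simp only [map_add, map_mul, Polynomial.aeval_C, Polynomial.aeval_X]
        rw [hx]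
        field_simp
        simp only [algebraMap_int_eq, eq_intCast]
        ring
      have hfx : Polynomial.aeval x f = 0 := by
        obtain ⟨t, rfl⟩ := hgf
        rw [map_mul, hgx, zero_mul]
      exact hrat x hfx
    · -- degree ≥ 2
      have h2 : B ^ 2 ≤ B ^ g.natDegree := pow_le_pow_right₀ hB1 hd2
      have h3 : Q < B ^ 2 := by
        have := pow_lt_pow_left₀ hQB hsq0 (two_ne_zero)
        rwa [Real.sq_sqrt hQ0.le] at this
      linarith
end

section
/- Let f(X) be a polynomial with non-negative integer coefficients of degree n ≥ 2. If for some integer m > 1/sin(π/n) one has f(m) = p^k with p a prime number and k a positive integer, and p does not divide f'(m), then f is irreducible over ℚ. -/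
section AuxStmt17

open Polynomial Complex


/-- A polynomial with nonnegative integer coefficients has no complex root in the open
sector `|arg z| < π / n`, `z ≠ 0`. -/
lemma aux_no_root (n : ℕ) (hn : 2 ≤ n) (f : Polynomial ℤ) (hdeg : f.natDegree = n)
    (hcoeff : ∀ i, 0 ≤ f.coeff i) (z : ℂ) (hz : z ≠ 0)
    (harg : |z.arg| < Real.pi / n) : (f.map (Int.castRingHom ℂ)).eval z ≠ 0 := by
  have hf0 : f ≠ 0 := by
    intro h; rw [h] at hdeg; simp at hdeg; omega
  have hlead : 0 < f.coeff n := by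
    rcases lt_or_eq_of_le (hcoeff n) with h | h
    · exact h
    · exfalso
      have : f.leadingCoeff ≠ 0 := leadingCoeff_ne_zero.mpr hf0
      rw [leadingCoeff, hdeg] at this
      exact this h.symm
  set φ := z.arg with hφ
  set r := ‖z‖ with hr
  have hrpos : 0 < r := norm_pos_iff.mpr hz
  have hnpos : (0:ℝ) < n := by positivity
  -- angles
  have hang : ∀ j ∈ Finset.range (n+1), |(j:ℝ) * φ - n * φ / 2| < Real.pi / 2 := by
    intro j hj
    rw [Finset.mem_range] at hj
    have hj' : (j:ℝ) ≤ n := by exact_mod_cast Nat.lt_succ_iff.mp hj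
    have hj0 : (0:ℝ) ≤ j := by positivity
    have h1 : |(j:ℝ) * φ - n * φ / 2| = |(j:ℝ) - n/2| * |φ| := by
      rw [← abs_mul]; ring_nf
    have h2 : |(j:ℝ) - n/2| ≤ n/2 := by
      rw [abs_le]; constructor <;> nlinarith
    calc |(j:ℝ) * φ - n * φ / 2| ≤ (n/2) * |φ| := by
          rw [h1]; exact mul_le_mul_of_nonneg_right h2 (abs_nonneg _)
      _ < (n/2) * (Real.pi / n) := by
          apply mul_lt_mul_of_pos_left harg; positivity
      _ = Real.pi / 2 := by field_simp
  have key : 0 < ((f.map (Int.castRingHom ℂ)).eval z * Complex.exp (-(↑(n * φ / 2) * I))).re := by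
    have heval : (f.map (Int.castRingHom ℂ)).eval z
        = ∑ j ∈ Finset.range (n+1), ((f.coeff j : ℂ)) * z ^ j := by
      rw [eval_map, eval₂_eq_sum_range]
      simp [hdeg]
    rw [heval, Finset.sum_mul, Complex.re_sum]
    have hterm : ∀ j ∈ Finset.range (n+1),
        (((f.coeff j : ℂ)) * z ^ j * Complex.exp (-(↑(n * φ / 2) * I))).re
        = (f.coeff j : ℝ) * r ^ j * Real.cos ((j:ℝ) * φ - n * φ / 2) := by
      intro j hj
      have hz' : z = (r:ℂ) * Complex.exp (↑φ * I) := (Complex.norm_mul_exp_arg_mul_I z).symm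
      rw [hz', mul_pow, ← Complex.exp_nat_mul]
      have e : Complex.exp ((j:ℂ) * (↑φ * I)) * Complex.exp (-(↑(n * φ / 2) * I))
          = Complex.exp (↑((j:ℝ) * φ - n * φ / 2) * I) := by
        rw [← Complex.exp_add]; congr 1; push_cast; ring
      have : ((f.coeff j : ℂ)) * ((r:ℂ)^j * Complex.exp ((j:ℂ) * (↑φ * I)))
          * Complex.exp (-(↑(n * φ / 2) * I))
          = ((((f.coeff j : ℝ) * r ^ j : ℝ)):ℂ) * Complex.exp (↑((j:ℝ) * φ - n * φ / 2) * I) := by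
        rw [← e]; push_cast; ring
      rw [this, Complex.re_ofReal_mul, Complex.exp_ofReal_mul_I_re]
    have hcos : ∀ j ∈ Finset.range (n+1), 0 < Real.cos ((j:ℝ) * φ - n * φ / 2) := by
      intro j hj
      have := hang j hj
      rw [abs_lt] at this
      exact Real.cos_pos_of_mem_Ioo ⟨this.1, this.2⟩
    apply Finset.sum_pos'
    · intro j hj
      rw [hterm j hj]
      have h1 : (0:ℝ) ≤ (f.coeff j : ℝ) := by exact_mod_cast hcoeff j
      have := (hcos j hj).le
      positivity
    · refine ⟨n, Finset.self_mem_range_succ n, ?_⟩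
      rw [hterm n (Finset.self_mem_range_succ n)]
      have h1 : (0:ℝ) < (f.coeff n : ℝ) := by exact_mod_cast hlead
      have := hcos n (Finset.self_mem_range_succ n)
      positivity
  intro h
  rw [h, zero_mul] at key
  simp at key

lemma aux_dist (n : ℕ) (hn : 2 ≤ n) (s : ℝ) (hs : 1 / Real.sin (Real.pi / n) < s) (z : ℂ)
    (hz : z = 0 ∨ Real.pi / n ≤ |z.arg|) : 1 < ‖(s:ℂ) - z‖ := by
  have hnpos : (0:ℝ) < n := by positivity
  set θ := Real.pi / n with hθ
  have hθpos : 0 < θ := by positivity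
  have hθle : θ ≤ Real.pi / 2 := by
    rw [hθ]
    apply div_le_div_of_nonneg_left Real.pi_pos.le (by norm_num)
    exact_mod_cast hn
  have hθltpi : θ < Real.pi := lt_of_le_of_lt hθle (by linarith [Real.pi_pos])
  have hsin : 0 < Real.sin θ := Real.sin_pos_of_pos_of_lt_pi hθpos hθltpi
  have hsin1 : Real.sin θ ≤ 1 := Real.sin_le_one θ
  have hssin : 1 < s * Real.sin θ := by rw [div_lt_iff₀ hsin] at hs; linarith
  have hs1 : 1 < s := by nlinarith
  rcases hz with rfl | hz
  · rw [sub_zero, Complex.norm_real, Real.norm_eq_abs]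
    rw [abs_of_pos (by linarith)]; exact hs1
  · have hzne : z ≠ 0 := by
      intro h; rw [h] at hz; simp [Complex.arg_zero] at hz; linarith
    have hcos : Real.cos z.arg ≤ Real.cos θ := by
      rw [← Real.cos_abs]
      exact Real.cos_le_cos_of_nonneg_of_le_pi hθpos.le (Complex.abs_arg_le_pi z) hz
    have hre : z.re ≤ ‖z‖ * Real.cos θ := by
      have h1 := Complex.cos_arg hzne
      have h2 : z.re = ‖z‖ * Real.cos z.arg := by
        rw [h1]; field_simp [norm_ne_zero_iff.mpr hzne]
      rw [h2]
      exact mul_le_mul_of_nonneg_left hcos (norm_nonneg z)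
    have hcosnn : 0 ≤ Real.cos θ := Real.cos_nonneg_of_mem_Icc ⟨by linarith, hθle⟩
    have habs2 : (‖(s:ℂ) - z‖)^2 = (s - z.re)^2 + z.im^2 := by
      rw [Complex.sq_norm, Complex.normSq_apply]; simp; ring
    have hzabs : (‖z‖)^2 = z.re^2 + z.im^2 := by
      rw [Complex.sq_norm, Complex.normSq_apply]; ring
    have hpy : Real.sin θ^2 + Real.cos θ^2 = 1 := Real.sin_sq_add_cos_sq θ
    have h4 : 1 < (s * Real.sin θ)^2 := by nlinarith
    have key : 1 < (‖(s:ℂ) - z‖)^2 := by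
      have h5 : s^2 * (Real.sin θ^2 + Real.cos θ^2) = s^2 * 1 := by rw [hpy]
      nlinarith [mul_le_mul_of_nonneg_left hre (by linarith : (0:ℝ) ≤ s),
        sq_nonneg (‖z‖ - s * Real.cos θ), h5]
    nlinarith [norm_nonneg ((s:ℂ) - z)]

lemma aux_prod_le (s : Multiset ℝ) (h : ∀ x ∈ s, 1 ≤ x) : 1 ≤ s.prod := by
  induction s using Multiset.induction_on with
  | empty => simp
  | cons a t ih =>
    rw [Multiset.prod_cons]
    have h1 := h a (Multiset.mem_cons_self a t)
    have ht := ih fun x hx => h x (Multiset.mem_cons_of_mem hx)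
    nlinarith

lemma aux_prod (s : Multiset ℝ) (h : ∀ x ∈ s, 1 < x) (hs : s ≠ 0) : 1 < s.prod := by
  obtain ⟨a, ha⟩ := Multiset.exists_mem_of_ne_zero hs
  obtain ⟨t, rfl⟩ := Multiset.exists_cons_of_mem ha
  rw [Multiset.prod_cons]
  have ha1 : 1 < a := h a (Multiset.mem_cons_self a t)
  have ht : 1 ≤ t.prod := aux_prod_le t fun x hx =>
    (h x (Multiset.mem_cons_of_mem hx)).le
  nlinarith

lemma aux_val (f g : Polynomial ℤ) (hgf : g ∣ f) (hg : 0 < g.natDegree) (m : ℤ)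
    (hroot : ∀ z : ℂ, (f.map (Int.castRingHom ℂ)).eval z = 0 → 1 < ‖((m:ℤ):ℂ) - z‖) :
    1 < |g.eval m| := by
  set gC := g.map (Int.castRingHom ℂ) with hgC
  have hg0 : g ≠ 0 := fun h => by simp [h] at hg
  have hinj : Function.Injective (Int.castRingHom ℂ) := Int.cast_injective
  have hgC0 : gC ≠ 0 := fun h => hg0 (Polynomial.map_injective _ hinj (by simp [← hgC, h]))
  have hdegC : gC.natDegree = g.natDegree := Polynomial.natDegree_map_eq_of_injective hinj g
  have hsplit : Splits gC := IsAlgClosed.splits gC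
  have hfact := hsplit.eq_prod_roots
  have hdvdC : gC ∣ f.map (Int.castRingHom ℂ) := Polynomial.map_dvd _ hgf
  -- each root of gC is far from m
  have hfar : ∀ a ∈ gC.roots, 1 < ‖((m:ℤ):ℂ) - a‖ := by
    intro a ha
    have h1 : gC.eval a = 0 := (Polynomial.mem_roots hgC0).mp ha
    obtain ⟨c, hc⟩ := hdvdC
    exact hroot a (by rw [hc, eval_mul, h1, zero_mul])
  have heval : gC.eval ((m:ℤ):ℂ)
      = gC.leadingCoeff * ((gC.roots.map fun a => ((m:ℤ):ℂ) - a).prod) := by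
    conv_lhs => rw [hfact]
    rw [eval_mul, eval_C, eval_multiset_prod, Multiset.map_map]
    congr 1
    simp [Function.comp]
  have habs : ‖gC.eval ((m:ℤ):ℂ)‖
      = ‖gC.leadingCoeff‖
        * ((gC.roots.map fun a => ‖((m:ℤ):ℂ) - a‖).prod) := by
    rw [heval, norm_mul]
    congr 1
    simpa [Multiset.map_map, Function.comp] using map_multiset_prod (normHom : ℂ →*₀ ℝ) (gC.roots.map fun a => ((m:ℤ):ℂ) - a)
  have hlc1 : 1 ≤ ‖gC.leadingCoeff‖ := by
    have hlc : gC.leadingCoeff = ((g.leadingCoeff : ℤ) : ℂ) := by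
      rw [leadingCoeff, hdegC, hgC, coeff_map]; rfl
    rw [hlc, Complex.norm_intCast]
    have : g.leadingCoeff ≠ 0 := leadingCoeff_ne_zero.mpr hg0
    have := Int.one_le_abs this
    exact_mod_cast this
  have hcard : gC.roots ≠ 0 := by
    have := (splits_iff_card_roots.mp hsplit)
    intro h
    rw [h] at this
    simp at this
    omega
  have hprod : 1 < ((gC.roots.map fun a => ‖((m:ℤ):ℂ) - a‖).prod) := by
    apply aux_prod
    · intro x hx
      obtain ⟨a, ha, rfl⟩ := Multiset.mem_map.mp hx
      exact hfar a ha
    · simpa using hcard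
  have hcast : gC.eval ((m:ℤ):ℂ) = ((g.eval m : ℤ) : ℂ) := by
    rw [hgC]
    exact_mod_cast eval_intCast_map (Int.castRingHom ℂ) g m
  have : 1 < ‖((g.eval m : ℤ) : ℂ)‖ := by
    rw [← hcast, habs]
    nlinarith
  rw [Complex.norm_intCast] at this
  exact_mod_cast this

lemma aux_pdvd (p : ℕ) (hp : p.Prime) (k : ℕ) (r : ℤ) (hr : r ∣ (p:ℤ)^k) (hu : ¬ IsUnit r) :
    (p:ℤ) ∣ r := by
  by_contra h
  have hpz : Prime ((p:ℤ)) := Nat.prime_iff_prime_int.mp hp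
  have hc : IsCoprime ((p:ℤ)) r := (hpz.coprime_iff_not_dvd).mpr h
  exact hu ((hc.pow_left.symm).isUnit_of_dvd hr)


theorem stmt_17 (n : ℕ) (hn : 2 ≤ n) (f : Polynomial ℤ) (hdeg : f.natDegree = n)
    (hcoeff : ∀ i, 0 ≤ f.coeff i)
    (m : ℤ) (hm : 1 / Real.sin (Real.pi / n) < (m : ℝ))
    (p : ℕ) (hp : p.Prime) (k : ℕ) (hk : 0 < k)
    (hfm : f.eval m = (p : ℤ) ^ k)
    (hder : ¬ (p : ℤ) ∣ f.derivative.eval m) :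
    Irreducible (f.map (Int.castRingHom ℚ)) := by
  have hf0 : f ≠ 0 := by intro h; rw [h] at hdeg; simp at hdeg; omega
  have hroot : ∀ z : ℂ, (f.map (Int.castRingHom ℂ)).eval z = 0 →
      1 < ‖((m:ℤ):ℂ) - z‖ := by
    intro z hzroot
    have hcase : z = 0 ∨ Real.pi / n ≤ |z.arg| := by
      by_contra h
      push_neg at h
      exact absurd hzroot (aux_no_root n hn f hdeg hcoeff z h.1 h.2)
    have h2 := aux_dist n hn (m:ℝ) hm z hcase
    have hcast : (((m:ℝ)):ℂ) = ((m:ℤ):ℂ) := by push_cast; ring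
    rwa [hcast] at h2
  have hprim : f.IsPrimitive := by
    intro r hr
    by_contra hu
    obtain ⟨h, hh⟩ := hr
    have h1 : r ∣ (p:ℤ)^k := ⟨h.eval m, by rw [← hfm, hh, eval_mul, eval_C]⟩
    have h2 : (p:ℤ) ∣ r := aux_pdvd p hp k r h1 hu
    apply hder
    have hd : f.derivative = Polynomial.C r * h.derivative := by
      rw [hh, derivative_C_mul]
    exact h2.trans ⟨h.derivative.eval m, by rw [hd, eval_mul, eval_C]⟩
  have hirr : Irreducible f := by
    constructor
    · intro hu
      have := Polynomial.natDegree_eq_zero_of_isUnit hu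
      omega
    · intro a b hab
      by_cases ha : a.natDegree = 0
      · left
        obtain ⟨c, hc⟩ := Polynomial.natDegree_eq_zero.mp ha
        have hcd : Polynomial.C c ∣ f := ⟨b, by rw [hab, hc]⟩
        rw [← hc]
        exact Polynomial.isUnit_C.mpr (hprim c hcd)
      by_cases hb : b.natDegree = 0
      · right
        obtain ⟨c, hc⟩ := Polynomial.natDegree_eq_zero.mp hb
        have hcd : Polynomial.C c ∣ f := ⟨a, by rw [hab, hc, mul_comm]⟩
        rw [← hc]
        exact Polynomial.isUnit_C.mpr (hprim c hcd)
      · exfalso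
        have hda : 0 < a.natDegree := Nat.pos_of_ne_zero ha
        have hdb : 0 < b.natDegree := Nat.pos_of_ne_zero hb
        have hva := aux_val f a ⟨b, hab⟩ hda m hroot
        have hvb := aux_val f b ⟨a, by rw [hab, mul_comm]⟩ hdb m hroot
        have hprod : a.eval m * b.eval m = (p:ℤ)^k := by
          rw [← eval_mul, ← hab, hfm]
        have hua : ¬ IsUnit (a.eval m) := by
          intro h
          rcases Int.isUnit_iff.mp h with h | h <;> rw [h] at hva <;> simp at hva
        have hub : ¬ IsUnit (b.eval m) := by
          intro h
          rcases Int.isUnit_iff.mp h with h | h <;> rw [h] at hvb <;> simp at hvb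
        have hpa := aux_pdvd p hp k (a.eval m) ⟨b.eval m, hprod.symm⟩ hua
        have hpb := aux_pdvd p hp k (b.eval m) ⟨a.eval m, by rw [← hprod]; ring⟩ hub
        apply hder
        rw [hab, derivative_mul, eval_add, eval_mul, eval_mul]
        exact dvd_add (hpb.mul_left _) (hpa.mul_right _)
  exact (Polynomial.IsPrimitive.Int.irreducible_iff_irreducible_map_cast hprim).mp hirr

end AuxStmt17
end

section
/- Let f(X) = a_0 + a_1 X + ... + a_n X^n be a polynomial with integer coefficients of degree n ≥ 2 such that every partial sum a_n + a_{n−1} + ... + a_{n−j}, for 0 ≤ j ≤ n, is non-negative. If for some integer m > 1 + 1/sin(π/n) one has f(m) = p^k with p a prime number and k a positive integer, and p does not divide f'(m), then f is irreducible over ℚ. -/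
open Polynomial Finset Complex
open scoped Real ComplexConjugate

theorem Finset.sum_range_succ_comp_sub_eq_sum_Ico {M : Type*} [AddCommMonoid M] (a : ℕ → M)
    {j n : ℕ} (hj : j ≤ n) : ∑ i ∈ range (j + 1), a (n - i) = ∑ i ∈ Ico (n - j) (n + 1), a i := by
  rw [range_eq_Ico, sum_Ico_reflect _ _ (by omega), Nat.sub_zero,
    show n + 1 - (j + 1) = n - j by omega]

theorem Polynomial.aeval_eq_sub_one_mul_add {R A : Type*} [CommRing R] [CommRing A] [Algebra R A]
    {f : R[X]} {n : ℕ} (hf : f.natDegree ≤ n) (z : A) :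
    aeval z f =
      (z - 1) * ∑ k ∈ range n, algebraMap R A (∑ i ∈ Ico (k + 1) (n + 1), f.coeff i) * z ^ k +
        algebraMap R A (f.eval 1) := by
  have hlt : f.natDegree < n + 1 := Nat.lt_succ_of_le hf
  rw [aeval_eq_sum_range' hlt, eval_eq_sum_range' hlt, ← sub_eq_iff_eq_add, map_sum,
    ← sum_sub_distrib]
  calc ∑ i ∈ range (n + 1), (f.coeff i • z ^ i - algebraMap R A (f.coeff i * 1 ^ i))
      = ∑ i ∈ range (n + 1), ∑ k ∈ range i, (z - 1) * (algebraMap R A (f.coeff i) * z ^ k) := by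
        refine sum_congr rfl fun i _ => ?_
        rw [one_pow, mul_one, Algebra.smul_def, ← mul_sub_one, ← geom_sum_mul, ← mul_sum,
          ← mul_sum]
        ring
    _ = ∑ k ∈ range n, ∑ i ∈ Ico (k + 1) (n + 1), (z - 1) * (algebraMap R A (f.coeff i) * z ^ k) :=
        sum_comm' fun i k => by simp only [mem_range, mem_Ico]; omega
    _ = _ := by simp only [map_sum, sum_mul, mul_sum]

theorem Complex.arg_one_add_pos_and_lt {w : ℂ} (h0 : 0 < arg w) (hπ : arg w < π / 2) :
    0 < arg (1 + w) ∧ arg (1 + w) < arg w := by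
  have hw : 0 < ‖w‖ := norm_pos_iff.2 (by rintro rfl; simp at h0)
  have him : 0 < w.im := by
    rw [← norm_mul_sin_arg]
    exact mul_pos hw (Real.sin_pos_of_pos_of_lt_pi h0 (by linarith [Real.pi_pos]))
  have hre : 0 < w.re := by
    rw [← norm_mul_cos_arg]
    exact mul_pos hw (Real.cos_pos_of_mem_Ioo ⟨by linarith [Real.pi_pos], hπ⟩)
  have hlt : ‖w‖ < ‖1 + w‖ := by
    refine lt_of_pow_lt_pow_left₀ 2 (norm_nonneg _) ?_
    simp only [Complex.sq_norm, normSq_apply, add_re, one_re, add_im, one_im]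
    nlinarith
  have hw1 : 0 < ‖1 + w‖ := hw.trans hlt
  rw [arg_of_re_nonneg (by simp; linarith), arg_of_re_nonneg hre.le, add_im, one_im, zero_add]
  refine ⟨Real.arcsin_pos.2 (div_pos him hw1), Real.arcsin_lt_arcsin ?_ ?_ ?_⟩
  · exact (neg_one_lt_zero.trans (div_pos him hw1)).le
  · exact div_lt_div_of_pos_left him hw hlt
  · exact div_le_one_of_le₀ (abs_im_le_norm w |>.trans' (le_abs_self _)) hw.le

theorem Complex.im_mul_one_add_pow_pos {w : ℂ} (h0 : 0 < arg w) (hπ : arg w < π / 2) {k : ℕ}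
    (hk : (k + 1) * arg w < π) : 0 < (w * (1 + w) ^ k).im := by
  obtain ⟨hpos, hlt⟩ := arg_one_add_pos_and_lt h0 hπ
  have polar : w * (1 + w) ^ k =
      ((‖w‖ * ‖1 + w‖ ^ k : ℝ) : ℂ) * exp ((arg w + k * arg (1 + w) : ℝ) * I) := by
    calc w * (1 + w) ^ k
        = ‖w‖ * exp (arg w * I) * (‖1 + w‖ * exp (arg (1 + w) * I)) ^ k := by
          rw [norm_mul_exp_arg_mul_I, norm_mul_exp_arg_mul_I]
      _ = _ := by
          push_cast
          rw [add_mul, exp_add, mul_assoc (k : ℂ), exp_nat_mul]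
          ring
  rw [polar, im_ofReal_mul, exp_ofReal_mul_I_im]
  have hw : w ≠ 0 := by rintro rfl; simp at h0
  have hw1 : 1 + w ≠ 0 := by intro h; rw [h] at hpos; simp at hpos
  refine mul_pos (by positivity) (Real.sin_pos_of_pos_of_lt_pi (by positivity) ?_)
  nlinarith

theorem Complex.im_mul_sum_pos {n : ℕ} (hn : 2 ≤ n) {w : ℂ} (h0 : 0 < arg w) (hlt : arg w < π / n)
    {t : ℕ → ℝ} (ht : ∀ k < n, 0 ≤ t k) (hpos : ∃ k < n, 0 < t k) :
    0 < (w * ∑ k ∈ range n, (t k : ℂ) * (1 + w) ^ k).im := by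
  have hn0 : (0 : ℝ) < n := by positivity
  have hπ : arg w < π / 2 :=
    hlt.trans_le (div_le_div_of_nonneg_left Real.pi_pos.le two_pos (by exact_mod_cast hn))
  have hterm : ∀ k < n, 0 < (w * (1 + w) ^ k).im := fun k hk => by
    refine im_mul_one_add_pow_pos h0 hπ ?_
    have hk' : (k + 1 : ℝ) ≤ n := by exact_mod_cast hk
    calc (k + 1) * arg w ≤ n * arg w := by gcongr
      _ < n * (π / n) := by gcongr
      _ = π := by field_simp
  have hsplit : ∀ k, (w * ((t k : ℂ) * (1 + w) ^ k)).im = t k * (w * (1 + w) ^ k).im := fun k => by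
    rw [mul_left_comm, im_ofReal_mul]
  obtain ⟨k₀, hk₀, ht₀⟩ := hpos
  rw [mul_sum, im_sum]
  refine sum_pos' (fun k hk => ?_) ⟨k₀, mem_range.2 hk₀, ?_⟩
  · rw [hsplit]; exact mul_nonneg (ht k (mem_range.1 hk)) (hterm k (mem_range.1 hk)).le
  · rw [hsplit]; exact mul_pos ht₀ (hterm k₀ hk₀)

theorem Complex.re_le_norm_mul_cos {w : ℂ} {α : ℝ} (hα : 0 ≤ α) (hw : w = 0 ∨ α ≤ |arg w|) :
    w.re ≤ ‖w‖ * Real.cos α := by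
  rcases hw with rfl | hw
  · simp
  rw [← norm_mul_cos_arg, ← Real.cos_abs (arg w)]
  exact mul_le_mul_of_nonneg_left
    (Real.cos_le_cos_of_nonneg_of_le_pi hα (abs_arg_le_pi w) hw) (norm_nonneg w)

theorem Complex.mul_sin_le_norm_ofReal_sub {c α : ℝ} (hc : 0 ≤ c) {w : ℂ}
    (hw : w.re ≤ ‖w‖ * Real.cos α) : c * Real.sin α ≤ ‖(c : ℂ) - w‖ := by
  have hnorm : ‖w‖ ^ 2 = w.re ^ 2 + w.im ^ 2 := by rw [Complex.sq_norm, normSq_apply]; ring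
  have hsq : (c * Real.sin α) ^ 2 ≤ ‖(c : ℂ) - w‖ ^ 2 := by
    rw [Complex.sq_norm, normSq_apply]
    simp only [sub_re, ofReal_re, sub_im, ofReal_im]
    nlinarith [sq_nonneg (‖w‖ - c * Real.cos α), mul_le_mul_of_nonneg_left hw hc,
      congrArg (c ^ 2 * ·) (Real.sin_sq_add_cos_sq α)]
  exact abs_le_of_sq_le_sq hsq (norm_nonneg _) |>.trans' (le_abs_self _)

theorem Complex.one_lt_norm_ofReal_sub {α x : ℝ} (hα : 0 ≤ α) (hsin : 0 < Real.sin α)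
    (hx : 1 + 1 / Real.sin α < x) {z : ℂ} (hz : z = 1 ∨ α ≤ |arg (z - 1)|) : 1 < ‖(x : ℂ) - z‖ := by
  have hx1 : 1 / Real.sin α < x - 1 := by linarith
  calc 1 < (x - 1) * Real.sin α := (div_lt_iff₀ hsin).1 hx1
    _ ≤ ‖((x - 1 : ℝ) : ℂ) - (z - 1)‖ :=
        mul_sin_le_norm_ofReal_sub ((one_div_pos.2 hsin).le.trans hx1.le)
          (re_le_norm_mul_cos hα (hz.imp_left sub_eq_zero.2))
    _ = ‖(x : ℂ) - z‖ := by push_cast; ring_nf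

namespace Polynomial

section TailSums

variable {f : ℝ[X]} {n : ℕ} (hdeg : f.natDegree = n) (hn : 0 < n)
  (htail : ∀ k ≤ n, 0 ≤ ∑ i ∈ Ico k (n + 1), f.coeff i)
include hdeg hn htail

theorem exists_lt_sum_Ico_coeff_pos : ∃ k < n, 0 < ∑ i ∈ Ico (k + 1) (n + 1), f.coeff i := by
  refine ⟨n - 1, by omega, ?_⟩
  have hf : f ≠ 0 := by rintro rfl; simp at hdeg; omega
  have htop := htail n le_rfl
  rw [Nat.sub_add_cancel hn]
  rw [Nat.Ico_succ_singleton, sum_singleton] at htop ⊢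
  exact htop.lt_of_ne' (hdeg ▸ leadingCoeff_ne_zero.2 hf)

omit hn in
theorem eval_one_nonneg : 0 ≤ f.eval 1 := by
  rw [eval_eq_sum_range, hdeg, range_eq_Ico]
  simpa using htail 0 (Nat.zero_le n)

theorem eval_pos_of_one_lt {x : ℝ} (hx : 1 < x) : 0 < f.eval x := by
  rw [← coe_aeval_eq_eval, aeval_eq_sub_one_mul_add hdeg.le]
  simp only [Algebra.algebraMap_self, RingHom.id_apply]
  obtain ⟨k₀, hk₀, ht₀⟩ := exists_lt_sum_Ico_coeff_pos hdeg hn htail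
  have hsum : 0 < ∑ k ∈ range n, (∑ i ∈ Ico (k + 1) (n + 1), f.coeff i) * x ^ k :=
    sum_pos' (fun k hk => mul_nonneg (htail _ (by simp at hk; omega)) (by positivity))
      ⟨k₀, mem_range.2 hk₀, mul_pos ht₀ (by positivity)⟩
  have := eval_one_nonneg hdeg htail
  nlinarith

end TailSums

theorem eq_one_or_pi_div_le_abs_arg_sub_one {f : ℝ[X]} {n : ℕ} (hdeg : f.natDegree = n)
    (hn : 2 ≤ n) (htail : ∀ k ≤ n, 0 ≤ ∑ i ∈ Ico k (n + 1), f.coeff i) {z : ℂ}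
    (hz : aeval z f = 0) : z = 1 ∨ π / n ≤ |arg (z - 1)| := by
  by_contra! ⟨hz1, harg⟩
  rw [abs_lt] at harg
  wlog h0 : 0 ≤ arg (z - 1) generalizing z
  · have hconj : arg (conj z - 1) = -arg (z - 1) := by
      rw [show conj z - 1 = conj (z - 1) by simp, arg_conj, if_neg (by linarith [Real.pi_pos])]
    refine this (z := conj z) ?_ ?_ ?_ ?_
    · rw [← conjAe_coe, aeval_algHom_apply, hz, map_zero]
    · rwa [Ne, ← (starRingEnd ℂ).injective.eq_iff, conj_conj, map_one]
    · rw [hconj]; constructor <;> linarith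
    · rw [hconj]; linarith
  rcases h0.eq_or_lt with h0 | h0
  · obtain ⟨hre, him⟩ := arg_eq_zero_iff.1 h0.symm
    have hz_re : z = (z.re : ℂ) := Complex.ext rfl (by simpa using him)
    have hx : 1 < z.re := by
      refine lt_of_le_of_ne (by simpa using hre) fun h => hz1 ?_
      rw [hz_re, ← h, ofReal_one]
    rw [hz_re, ← coe_algebraMap, aeval_algebraMap_apply_eq_algebraMap_eval] at hz
    exact (eval_pos_of_one_lt hdeg (by omega) htail hx).ne' (by simpa using hz)
  · have him := im_mul_sum_pos hn h0 harg.2 (fun k hk => htail (k + 1) hk)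
      (exists_lt_sum_Ico_coeff_pos hdeg (by omega) htail)
    rw [aeval_eq_sub_one_mul_add hdeg.le] at hz
    have := congrArg im hz
    simp only [add_im, coe_algebraMap, ofReal_im, add_zero, zero_im] at this
    rw [add_sub_cancel] at him
    exact him.ne' this

end Polynomial

theorem Prime.dvd_of_dvd_pow_of_not_isUnit {M : Type*} [CommMonoidWithZero M] [IsCancelMulZero M]
    {p r : M} (hp : Prime p) {k : ℕ} (hr : r ∣ p ^ k) (hu : ¬IsUnit r) : p ∣ r := by
  obtain ⟨i, -, hi⟩ := (dvd_prime_pow hp k).1 hr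
  rcases i with _ | i
  · exact absurd (associated_one_iff_isUnit.1 (by simpa using hi)) hu
  · exact (dvd_pow_self p i.succ_ne_zero).trans hi.symm.dvd

theorem Polynomial.isUnit_eval_or_isUnit_eval {R : Type*} [CommRing R] [IsDomain R] {p : R}
    (hp : Prime p) {g h : R[X]} {m : R} {k : ℕ} (hm : (g * h).eval m = p ^ k)
    (hder : ¬p ∣ (g * h).derivative.eval m) : IsUnit (g.eval m) ∨ IsUnit (h.eval m) := by
  by_contra! ⟨hg, hh⟩
  rw [eval_mul] at hm
  have hpg := hp.dvd_of_dvd_pow_of_not_isUnit (hm ▸ dvd_mul_right _ _) hg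
  have hph := hp.dvd_of_dvd_pow_of_not_isUnit (hm ▸ dvd_mul_left _ _) hh
  apply hder
  rw [derivative_mul, eval_add, eval_mul, eval_mul]
  exact dvd_add (dvd_mul_of_dvd_right hph _) (dvd_mul_of_dvd_left hpg _)

namespace Polynomial

theorem one_lt_abs_eval_of_one_lt_norm_sub {g : ℤ[X]} (hg : 0 < g.natDegree) {m : ℤ}
    (hroots : ∀ z ∈ g.aroots ℂ, 1 < ‖(m : ℂ) - z‖) : 1 < |g.eval m| := by
  have hg0 : g ≠ 0 := by rintro rfl; simp at hg
  have hsplit := IsAlgClosed.splits (g.map (algebraMap ℤ ℂ))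
  have hnonempty : g.aroots ℂ ≠ 0 := by
    rw [← Multiset.card_pos, aroots, ← hsplit.natDegree_eq_card_roots,
      natDegree_map_eq_of_injective (RingHom.injective_int _)]
    exact hg
  have hprod : 1 < ((g.aroots ℂ).map fun z => ‖(m : ℂ) - z‖).prod :=
    Multiset.prod_induction_nonempty (1 < ·) (fun _ _ ha hb => one_lt_mul_of_le_of_lt ha.le hb)
      (by simpa using hnonempty) fun _ ha => by
        obtain ⟨z, hz, rfl⟩ := Multiset.mem_map.1 ha
        exact hroots z hz
  have hlead : (1 : ℝ) ≤ ‖(g.map (algebraMap ℤ ℂ)).leadingCoeff‖ := by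
    rw [leadingCoeff_map_of_injective (RingHom.injective_int _), algebraMap_int_eq, eq_intCast,
      norm_intCast]
    exact_mod_cast Int.one_le_abs (leadingCoeff_ne_zero.2 hg0)
  have heval : ‖(g.map (algebraMap ℤ ℂ)).eval (m : ℂ)‖ =
      ‖(g.map (algebraMap ℤ ℂ)).leadingCoeff‖ *
        ((g.aroots ℂ).map fun z => ‖(m : ℂ) - z‖).prod := by
    rw [hsplit.eval_eq_prod_roots, norm_mul]
    exact congrArg _ ((map_multiset_prod (normHom : ℂ →*₀ ℝ) _).trans
      (congrArg _ (Multiset.map_map _ _ _)))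
  have hcast : (g.map (algebraMap ℤ ℂ)).eval (m : ℂ) = ((g.eval m : ℤ) : ℂ) := by simp
  rw [hcast, norm_intCast] at heval
  exact_mod_cast heval ▸ one_lt_mul_of_le_of_lt hlead hprod

theorem isUnit_of_isUnit_eval {g : ℤ[X]} {m : ℤ} (hroots : ∀ z ∈ g.aroots ℂ, 1 < ‖(m : ℂ) - z‖)
    (hu : IsUnit (g.eval m)) : IsUnit g := by
  obtain ⟨c, rfl⟩ : ∃ c, C c = g := natDegree_eq_zero.1 <| by
    by_contra hg
    have := one_lt_abs_eval_of_one_lt_norm_sub (Nat.pos_of_ne_zero hg) hroots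
    rw [Int.isUnit_iff_abs_eq.1 hu] at this
    exact this.false
  exact isUnit_C.2 (by simpa using hu)

theorem irreducible_of_eval_eq_prime_pow {f : ℤ[X]} (hf : 0 < f.natDegree) {m : ℤ}
    (hroots : ∀ z ∈ f.aroots ℂ, 1 < ‖(m : ℂ) - z‖) {p : ℤ} (hp : Prime p) {k : ℕ}
    (hfm : f.eval m = p ^ k) (hder : ¬p ∣ f.derivative.eval m) : Irreducible f := by
  have hf0 : f ≠ 0 := by rintro rfl; simp at hf
  refine ⟨fun hu => hf.ne' (natDegree_eq_zero_of_isUnit hu), fun g h hgh => ?_⟩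
  subst hgh
  rw [aroots_mul hf0] at hroots
  exact (isUnit_eval_or_isUnit_eval hp hfm hder).imp
    (isUnit_of_isUnit_eval fun z hz => hroots z (Multiset.mem_add.2 (.inl hz)))
    (isUnit_of_isUnit_eval fun z hz => hroots z (Multiset.mem_add.2 (.inr hz)))

end Polynomial

theorem stmt_18_general (n : ℕ) (hn : 2 ≤ n) (f : Polynomial ℤ) (hdeg : f.natDegree = n)
    (hsum : ∀ j ≤ n, 0 ≤ ∑ i ∈ Finset.range (j + 1), f.coeff (n - i))
    (m : ℤ) (hm : 1 + 1 / Real.sin (Real.pi / n) < (m : ℝ))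
    (p : ℕ) (hp : p.Prime) (k : ℕ)
    (hfm : f.eval m = (p : ℤ) ^ k)
    (hder : ¬ (p : ℤ) ∣ f.derivative.eval m) :
    Irreducible (f.map (Int.castRingHom ℚ)) := by
  have hFdeg : (f.map (algebraMap ℤ ℝ)).natDegree = n := by
    rw [natDegree_map_eq_of_injective (RingHom.injective_int _), hdeg]
  have htail : ∀ j ≤ n, 0 ≤ ∑ i ∈ Ico j (n + 1), (f.map (algebraMap ℤ ℝ)).coeff i := by
    intro j hj
    have := hsum (n - j) (Nat.sub_le n j)
    rw [sum_range_succ_comp_sub_eq_sum_Ico _ (Nat.sub_le n j), Nat.sub_sub_self hj] at this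
    simp only [coeff_map, algebraMap_int_eq, eq_intCast]
    exact_mod_cast this
  have hsin : 0 < Real.sin (π / n) := Real.sin_pos_of_pos_of_lt_pi (by positivity)
    (div_lt_self Real.pi_pos (by exact_mod_cast hn))
  have hroots : ∀ z ∈ f.aroots ℂ, 1 < ‖(m : ℂ) - z‖ := fun z hz => by
    have hz' : aeval z (f.map (algebraMap ℤ ℝ)) = 0 := by
      rw [aeval_map_algebraMap]; exact (mem_aroots.1 hz).2
    exact_mod_cast one_lt_norm_ofReal_sub (by positivity) hsin hm
      (eq_one_or_pi_div_le_abs_arg_sub_one hFdeg hn htail hz')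
  have hirr :=
    irreducible_of_eval_eq_prime_pow (by omega) hroots (Nat.prime_iff_prime_int.1 hp) hfm hder
  exact (IsPrimitive.Int.irreducible_iff_irreducible_map_cast (hirr.isPrimitive (by omega))).1 hirr

theorem stmt_18 (n : ℕ) (hn : 2 ≤ n) (f : Polynomial ℤ) (hdeg : f.natDegree = n)
    (hsum : ∀ j ≤ n, 0 ≤ ∑ i ∈ Finset.range (j + 1), f.coeff (n - i))
    (m : ℤ) (hm : 1 + 1 / Real.sin (Real.pi / n) < (m : ℝ))
    (p : ℕ) (hp : p.Prime) (k : ℕ) (hk : 0 < k)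
    (hfm : f.eval m = (p : ℤ) ^ k)
    (hder : ¬ (p : ℤ) ∣ f.derivative.eval m) :
    Irreducible (f.map (Int.castRingHom ℚ)) :=
  stmt_18_general n hn f hdeg hsum m hm p hp k hfm hder
end

section
/- Let f(X) be a polynomial with integer coefficients of degree n ≥ 3 with f(0) ≠ 0, let f̃(X) = X^n · f(1/X) be its reciprocal polynomial, and assume that f̃ has no roots in the sector S_{ṽ, π/n} for some real number ṽ with 0 < ṽ < (1/2)·tan(π/(2n)). Set δ = sqrt( 1 + 1/(4ṽ²) − 1/(ṽ·sin(π/n)) ). If f(m) is a prime number for some integer m with 1/(2ṽ) − δ < m < 1/(2ṽ) + δ, then f is irreducible over ℚ. -/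
open Polynomial Real

/-- A closed disk centered on the real axis, strictly inside the wedge, lies in the sector. -/
lemma mem_sector_of_disk {θ v c r : ℝ} (hθ1 : 0 < θ) (hθ2 : θ ≤ π / 2)
    (hr : 0 ≤ r) (hc : r < (c - v) * Real.sin θ) (β : ℂ)
    (hβ : ‖(β - (c : ℂ))‖ ≤ r) : β ∈ sector v θ := by
  have hs0 : 0 < Real.sin θ := Real.sin_pos_of_pos_of_lt_pi hθ1
    (lt_of_le_of_lt hθ2 (by linarith [Real.pi_pos]))
  have hcos0 : 0 ≤ Real.cos θ := Real.cos_nonneg_of_mem_Icc ⟨by linarith, hθ2⟩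
  set u : ℂ := β - (c : ℂ) with hu
  set w : ℂ := β - (v : ℂ) with hw
  have hwre : w.re = (c - v) + u.re := by
    simp only [hw, hu, Complex.sub_re, Complex.ofReal_re]; ring
  have hwim : w.im = u.im := by
    simp only [hw, hu, Complex.sub_im, Complex.ofReal_im]
  have hA : ‖u‖ ≤ r := hβ
  have hA2 : (‖u‖) ^ 2 = u.re ^ 2 + u.im ^ 2 := by
    rw [Complex.sq_norm, Complex.normSq_apply]; ring
  have hA0 : 0 ≤ ‖u‖ := norm_nonneg u
  have hcs : Real.sin θ * |u.re| + Real.cos θ * |u.im| ≤ ‖u‖ := by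
    have h1 : (Real.sin θ * |u.re| + Real.cos θ * |u.im|) ^ 2 ≤ (‖u‖) ^ 2 := by
      nlinarith [sq_nonneg (Real.cos θ * |u.re| - Real.sin θ * |u.im|),
        Real.sin_sq_add_cos_sq θ, sq_abs u.re, sq_abs u.im]
    nlinarith [abs_nonneg u.re, abs_nonneg u.im,
      mul_nonneg hs0.le (abs_nonneg u.re), mul_nonneg hcos0 (abs_nonneg u.im)]
  have hure : -(Real.sin θ * |u.re|) ≤ Real.sin θ * u.re := by
    nlinarith [neg_abs_le u.re, hs0.le]
  have hkey : Real.cos θ * |w.im| < Real.sin θ * w.re := by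
    rw [hwre, hwim]
    nlinarith
  have hwre0 : 0 < w.re := by
    nlinarith [mul_nonneg hcos0 (abs_nonneg w.im)]
  have hw0 : w ≠ 0 := fun h => by simp [h] at hwre0
  refine ⟨fun h => hw0 (by simp [hw, h]), ?_⟩
  have habs0 : 0 < ‖w‖ := norm_pos_iff.mpr hw0
  have habsw : (‖w‖) ^ 2 = w.re ^ 2 + w.im ^ 2 := by
    rw [Complex.sq_norm, Complex.normSq_apply]; ring
  have hsq : (Real.cos θ * ‖w‖) ^ 2 < w.re ^ 2 := by
    have h0 : 0 ≤ Real.cos θ * |w.im| := mul_nonneg hcos0 (abs_nonneg _)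
    have him : (Real.cos θ * |w.im|) ^ 2 < (Real.sin θ * w.re) ^ 2 :=
      pow_lt_pow_left₀ hkey h0 (by norm_num)
    rw [mul_pow, mul_pow, sq_abs] at him
    have hW2 : (Real.cos θ * ‖w‖) ^ 2
        = Real.cos θ ^ 2 * w.re ^ 2 + Real.cos θ ^ 2 * w.im ^ 2 := by
      rw [mul_pow, habsw]; ring
    have e : Real.sin θ ^ 2 * w.re ^ 2 + Real.cos θ ^ 2 * w.re ^ 2 = w.re ^ 2 := by
      rw [← add_mul, Real.sin_sq_add_cos_sq, one_mul]
    linarith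
  have hlt : Real.cos θ * ‖w‖ < w.re := by
    nlinarith [mul_nonneg hcos0 habs0.le]
  have hcoslt : Real.cos θ < Real.cos (Complex.arg w) := by
    rw [Complex.cos_arg hw0]
    rw [lt_div_iff₀ habs0]
    linarith
  by_contra h
  push_neg at h
  have := Real.cos_le_cos_of_nonneg_of_le_pi hθ1.le (Complex.abs_arg_le_pi w) h
  rw [Real.cos_abs] at this
  linarith

/-- Inversion maps the closed unit disk around `m > 1` into a disk inside the wedge. -/
lemma inv_mem_disk {m : ℝ} (hm : 1 < m) {α : ℂ} (hαm : ‖(α - (m : ℂ))‖ ≤ 1) :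
    α ≠ 0 ∧ ‖(α⁻¹ - ((m / (m ^ 2 - 1) : ℝ) : ℂ))‖ ≤ 1 / (m ^ 2 - 1) := by
  have hm2 : 0 < m ^ 2 - 1 := by nlinarith
  have habs : m - 1 ≤ ‖α‖ := by
    have h1 : ‖((m : ℂ))‖ ≤ ‖α‖ + ‖(α - (m : ℂ))‖ := by
      calc ‖((m : ℂ))‖ = ‖(α + ((m : ℂ) - α))‖ := by ring_nf
        _ ≤ ‖α‖ + ‖((m : ℂ) - α)‖ := norm_add_le _ _
        _ = ‖α‖ + ‖(α - (m : ℂ))‖ := by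
            rw [show (m : ℂ) - α = -(α - (m : ℂ)) by ring, norm_neg]
    have h2 : ‖((m : ℂ))‖ = m := by
      rw [Complex.norm_real, Real.norm_eq_abs, abs_of_pos (by linarith)]
    nlinarith
  have hα0 : α ≠ 0 := by
    intro h
    rw [h] at habs
    simp at habs
    linarith
  refine ⟨hα0, ?_⟩
  have hsq : (α.re - m) ^ 2 + α.im ^ 2 ≤ 1 := by
    have := Complex.sq_norm (α - (m : ℂ))
    have h1 : (‖(α - (m : ℂ))‖) ^ 2 ≤ 1 := by
      nlinarith [norm_nonneg (α - (m : ℂ))]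
    rw [Complex.sq_norm, Complex.normSq_apply] at h1
    simp only [Complex.sub_re, Complex.sub_im, Complex.ofReal_re, Complex.ofReal_im,
      sub_zero] at h1
    nlinarith
  -- key : |m α − (m²−1)| ≤ |α|
  have hkey : ‖((m : ℂ) * α - ((m ^ 2 - 1 : ℝ) : ℂ))‖ ≤ ‖α‖ := by
    have h1 : Complex.normSq ((m : ℂ) * α - ((m ^ 2 - 1 : ℝ) : ℂ)) ≤ Complex.normSq α := by
      simp only [Complex.normSq_apply, Complex.sub_re, Complex.sub_im, Complex.mul_re,
        Complex.mul_im, Complex.ofReal_re, Complex.ofReal_im]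
      nlinarith [hsq, hm2]
    rw [Complex.norm_def, Complex.norm_def]
    exact Real.sqrt_le_sqrt h1
  have hne : ((m ^ 2 - 1 : ℝ) : ℂ) ≠ 0 := by
    exact_mod_cast (show ((m ^ 2 - 1 : ℝ)) ≠ 0 from ne_of_gt hm2)
  have hrepr : α⁻¹ - ((m / (m ^ 2 - 1) : ℝ) : ℂ)
      = (((m ^ 2 - 1 : ℝ) : ℂ) - (m : ℂ) * α) / (α * ((m ^ 2 - 1 : ℝ) : ℂ)) := by
    rw [eq_div_iff (mul_ne_zero hα0 hne)]
    have h6 : ((m / (m ^ 2 - 1) : ℝ) : ℂ) * ((m ^ 2 - 1 : ℝ) : ℂ) = (m : ℂ) := by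
      rw [← Complex.ofReal_mul]
      congr 1
      field_simp
    calc (α⁻¹ - ((m / (m ^ 2 - 1) : ℝ) : ℂ)) * (α * ((m ^ 2 - 1 : ℝ) : ℂ))
        = α⁻¹ * α * ((m ^ 2 - 1 : ℝ) : ℂ)
          - ((m / (m ^ 2 - 1) : ℝ) : ℂ) * ((m ^ 2 - 1 : ℝ) : ℂ) * α := by ring
      _ = ((m ^ 2 - 1 : ℝ) : ℂ) - (m : ℂ) * α := by
          rw [inv_mul_cancel₀ hα0, one_mul, h6]
  have h2 : ‖(((m ^ 2 - 1 : ℝ) : ℂ) - (m : ℂ) * α)‖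
      = ‖((m : ℂ) * α - ((m ^ 2 - 1 : ℝ) : ℂ))‖ := by
    rw [← norm_neg]; ring_nf
  have h3 : ‖((m ^ 2 - 1 : ℝ) : ℂ)‖ = m ^ 2 - 1 := by
    rw [Complex.norm_real, Real.norm_eq_abs, abs_of_pos hm2]
  rw [hrepr, norm_div, norm_mul, h2, h3]
  rw [div_le_div_iff₀ (mul_pos (norm_pos_iff.mpr hα0) hm2) hm2]
  nlinarith [norm_nonneg α, hkey, hm2]

/-- Any point whose reciprocal avoids the sector is far from `m`. -/
lemma one_lt_abs_sub {θ v m : ℝ} (hθ1 : 0 < θ) (hθ2 : θ ≤ π / 2) (hm : 1 < m)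
    (hq : 1 < (m - v * (m ^ 2 - 1)) * Real.sin θ) {α : ℂ}
    (hα : α⁻¹ ∉ sector v θ) : 1 < ‖(α - (m : ℂ))‖ := by
  by_contra h
  push_neg at h
  obtain ⟨hα0, hdisk⟩ := inv_mem_disk hm h
  have hm2 : 0 < m ^ 2 - 1 := by nlinarith
  apply hα
  apply mem_sector_of_disk hθ1 hθ2 (one_div_pos.mpr hm2).le ?_ _ hdisk
  have he : m / (m ^ 2 - 1) - v = (m - v * (m ^ 2 - 1)) / (m ^ 2 - 1) := by
    field_simp
  rw [he, div_mul_eq_mul_div, div_lt_div_iff₀ hm2 hm2]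
  nlinarith [hq, hm2]

/-- No nonconstant integer divisor of `f` can take a unit value at `m`. -/
lemma no_unit_factor {f : Polynomial ℤ} (hf0 : f.coeff 0 ≠ 0) {θ v : ℝ}
    (hθ1 : 0 < θ) (hθ2 : θ ≤ π / 2)
    (hrec : ∀ z ∈ sector v θ, Polynomial.aeval z f.reverse ≠ 0)
    {m : ℤ} (hm : 1 < (m : ℝ))
    (hq : 1 < ((m : ℝ) - v * ((m : ℝ) ^ 2 - 1)) * Real.sin θ)
    {q : Polynomial ℤ} (hq1 : 1 ≤ q.natDegree) (hqf : q ∣ f)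
    (hqm : IsUnit (q.eval m)) : False := by
  have hinj : Function.Injective (Int.castRingHom ℂ) := fun a b h => Int.cast_injective h
  have hqne : q ≠ 0 := fun h => by simp [h] at hq1
  set Q : Polynomial ℂ := q.map (Int.castRingHom ℂ) with hQ
  have hQ0 : Q ≠ 0 := (Polynomial.map_ne_zero_iff hinj).mpr hqne
  have hQdeg : Q.natDegree = q.natDegree := q.natDegree_map_eq_of_injective hinj
  have hsplits : Q.Splits := IsAlgClosed.splits Q
  have hcard : Multiset.card Q.roots = Q.natDegree := (Polynomial.splits_iff_card_roots).mp hsplits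
  have heq := Polynomial.Splits.eq_prod_roots hsplits
  -- each root is far from m
  have hroot : ∀ α ∈ Q.roots, 1 < ‖(α - ((m : ℤ) : ℂ))‖ := by
    intro α hα
    have hQα : Q.eval α = 0 := Polynomial.isRoot_of_mem_roots hα
    have hfα : Polynomial.eval₂ (Int.castRingHom ℂ) α f = 0 := by
      obtain ⟨t, rfl⟩ := hqf
      rw [← Polynomial.eval_map, Polynomial.map_mul, Polynomial.eval_mul, ← hQ, hQα, zero_mul]
    have hα0 : α ≠ 0 := by
      intro h
      rw [h] at hfα
      rw [Polynomial.eval₂_at_zero, eq_intCast] at hfα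
      exact hf0 (by exact_mod_cast hfα)
    have hnot : α⁻¹ ∉ sector v θ := by
      intro hmem
      apply hrec _ hmem
      have : Invertible α := invertibleOfNonzero hα0
      have h2 := (Polynomial.eval₂_reverse_eq_zero_iff (Int.castRingHom ℂ) α f).mpr hfα
      rw [invOf_eq_inv] at h2
      rw [Polynomial.aeval_def]
      rw [show algebraMap ℤ ℂ = Int.castRingHom ℂ from rfl]
      exact h2
    have := one_lt_abs_sub hθ1 hθ2 hm hq hnot
    exact_mod_cast this
  -- compute |Q.eval m|
  have hevalm : Q.eval ((m : ℤ) : ℂ) = ((q.eval m : ℤ) : ℂ) := by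
    rw [hQ, Polynomial.eval_map, show ((m : ℤ) : ℂ) = (Int.castRingHom ℂ) m from rfl,
      Polynomial.eval₂_at_apply, eq_intCast]
  have habs1 : ‖(Q.eval ((m : ℤ) : ℂ))‖ = 1 := by
    rw [hevalm]
    rcases Int.isUnit_iff.mp hqm with h | h <;> simp [h]
  have hlc : 1 ≤ ‖Q.leadingCoeff‖ := by
    have : Q.leadingCoeff ≠ 0 := Polynomial.leadingCoeff_ne_zero.mpr hQ0
    rw [hQ, Polynomial.leadingCoeff_map_of_injective hinj]
    rw [show (Int.castRingHom ℂ) q.leadingCoeff = ((q.leadingCoeff : ℤ) : ℂ) from rfl]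
    rw [Complex.norm_intCast]
    exact_mod_cast Int.one_le_abs (Polynomial.leadingCoeff_ne_zero.mpr hqne)
  have hprod : ‖(Q.eval ((m : ℤ) : ℂ))‖
      = ‖Q.leadingCoeff‖ *
        (Q.roots.map (fun a => ‖(((m : ℤ) : ℂ) - a)‖)).prod := by
    conv_lhs => rw [heq]
    rw [Polynomial.eval_mul, Polynomial.eval_C, norm_mul, Polynomial.eval_multiset_prod]
    rw [Multiset.map_map, show ∀ s : Multiset ℂ, ‖s.prod‖ = (s.map (‖·‖)).prod from fun s => map_multiset_prod (normHom : ℂ →*₀ ℝ) s, Multiset.map_map]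
    congr 1
    congr 1
    apply Multiset.map_congr rfl
    intro x _
    simp
  -- the product is > 1
  have hne : Q.roots ≠ 0 := by
    intro h
    have h0 : Q.natDegree = 0 := by rw [← hcard, h]; simp
    rw [hQdeg] at h0
    omega
  obtain ⟨α, hαmem⟩ := Multiset.exists_mem_of_ne_zero hne
  have hdecomp : Q.roots = α ::ₘ Q.roots.erase α := (Multiset.cons_erase hαmem).symm
  have hrest : (1 : ℝ) ≤ ((Q.roots.erase α).map
      (fun a => ‖(((m : ℤ) : ℂ) - a)‖)).prod := by
    apply Multiset.prod_induction (fun x => (1 : ℝ) ≤ x)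
    · intro a b ha hb
      nlinarith
    · norm_num
    intro x hx
    obtain ⟨a, ha, rfl⟩ := Multiset.mem_map.mp hx
    have := hroot a (Multiset.mem_of_mem_erase ha)
    have h5 : ‖(a - ((m : ℤ) : ℂ))‖ = ‖(((m : ℤ) : ℂ) - a)‖ := by
      rw [show ((m : ℤ) : ℂ) - a = -(a - ((m : ℤ) : ℂ)) by ring, norm_neg]
    linarith
  have hfirst := hroot α hαmem
  have h5 : ‖(α - ((m : ℤ) : ℂ))‖ = ‖(((m : ℤ) : ℂ) - α)‖ := by
    rw [show ((m : ℤ) : ℂ) - α = -(α - ((m : ℤ) : ℂ)) by ring, norm_neg]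
  rw [hdecomp] at hprod
  rw [Multiset.map_cons, Multiset.prod_cons] at hprod
  rw [habs1] at hprod
  set A := ‖(((m : ℤ) : ℂ) - α)‖ with hA
  set B := ((Q.roots.erase α).map (fun a => ‖(((m : ℤ) : ℂ) - a)‖)).prod with hB
  set L := ‖Q.leadingCoeff‖ with hL
  have hA1 : 1 < A := h5 ▸ hfirst
  have h6 : A * 1 ≤ A * B := mul_le_mul_of_nonneg_left hrest (by positivity)
  have h7 : 1 * (A * B) ≤ L * (A * B) := by
    apply mul_le_mul_of_nonneg_right hlc
    nlinarith
  nlinarith [hprod]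

theorem stmt_19 (n : ℕ) (hn : 3 ≤ n) (f : Polynomial ℤ) (hdeg : f.natDegree = n)
    (hf0 : f.coeff 0 ≠ 0)
    (vt : ℝ) (hvt0 : 0 < vt) (hvt : vt < Real.tan (Real.pi / (2 * n)) / 2)
    (hrec : ∀ z ∈ sector vt (Real.pi / n), Polynomial.aeval z f.reverse ≠ 0)
    (m : ℤ)
    (hm1 : 1 / (2 * vt) -
        Real.sqrt (1 + 1 / (4 * vt ^ 2) - 1 / (vt * Real.sin (Real.pi / n))) < (m : ℝ))
    (hm2 : (m : ℝ) < 1 / (2 * vt) +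
        Real.sqrt (1 + 1 / (4 * vt ^ 2) - 1 / (vt * Real.sin (Real.pi / n))))
    (p : ℕ) (hp : p.Prime) (hfm : f.eval m = (p : ℤ)) :
    Irreducible (f.map (Int.castRingHom ℚ)) := by
  -- basic real facts
  have hn3 : (3 : ℝ) ≤ (n : ℝ) := by exact_mod_cast hn
  have hπ := Real.pi_pos
  set θ := Real.pi / n with hθdef
  have hθ0 : 0 < θ := div_pos hπ (by linarith)
  have hθ2 : θ ≤ Real.pi / 2 := by
    apply div_le_div_of_nonneg_left hπ.le (by norm_num)
    linarith
  have hs0 : 0 < Real.sin θ := Real.sin_pos_of_pos_of_lt_pi hθ0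
    (lt_of_le_of_lt hθ2 (by linarith))
  have hs1 : Real.sin θ ≤ 1 := Real.sin_le_one θ
  -- vt < 1/2
  have htanlt : Real.tan (Real.pi / (2 * n)) < 1 := by
    rw [← Real.tan_pi_div_four]
    apply Real.tan_lt_tan_of_nonneg_of_lt_pi_div_two (by positivity) (by linarith)
    apply div_lt_div_of_pos_left hπ (by norm_num)
    linarith
  have hv2 : vt < 1 / 2 := by linarith
  have hinv : 1 < 1 / (2 * vt) := by
    rw [lt_div_iff₀ (by linarith)]
    linarith
  -- bound the square root
  set R := 1 + 1 / (4 * vt ^ 2) - 1 / (vt * Real.sin θ) with hR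
  have hRle : R ≤ (1 / (2 * vt) - 1) ^ 2 := by
    have e : (1 / (2 * vt) - 1) ^ 2 = 1 + 1 / (4 * vt ^ 2) - 1 / vt := by
      field_simp
      ring
    have h1 : 1 / vt ≤ 1 / (vt * Real.sin θ) := by
      apply one_div_le_one_div_of_le (by positivity)
      nlinarith
    rw [e, hR]
    linarith
  have hδle : Real.sqrt R ≤ 1 / (2 * vt) - 1 := by
    calc Real.sqrt R ≤ Real.sqrt ((1 / (2 * vt) - 1) ^ 2) := Real.sqrt_le_sqrt hRle
      _ = |1 / (2 * vt) - 1| := Real.sqrt_sq_eq_abs _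
      _ = 1 / (2 * vt) - 1 := abs_of_pos (by linarith)
  have hm : 1 < (m : ℝ) := by linarith
  -- quadratic inequality
  have habs : |(m : ℝ) - 1 / (2 * vt)| < Real.sqrt R := by
    rw [abs_lt]
    constructor <;> linarith
  have hR0 : 0 < R := by
    have h0 : 0 < Real.sqrt R := lt_of_le_of_lt (abs_nonneg _) habs
    by_contra h
    push_neg at h
    rw [Real.sqrt_eq_zero_of_nonpos h] at h0
    exact lt_irrefl _ h0
  have hδ2 : ((m : ℝ) - 1 / (2 * vt)) ^ 2 < R := by
    have h1 : ((m : ℝ) - 1 / (2 * vt)) ^ 2 = |(m : ℝ) - 1 / (2 * vt)| ^ 2 := (sq_abs _).symm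
    rw [h1, ← Real.sq_sqrt hR0.le]
    exact pow_lt_pow_left₀ habs (abs_nonneg _) (by norm_num)
  have hq : 1 < ((m : ℝ) - vt * ((m : ℝ) ^ 2 - 1)) * Real.sin θ := by
    have h9 : 4 * vt ^ 2 * Real.sin θ * (((m : ℝ) - 1 / (2 * vt)) ^ 2)
        < 4 * vt ^ 2 * Real.sin θ * R := by
      apply mul_lt_mul_of_pos_left hδ2 (by positivity)
    have h10 : 4 * vt ^ 2 * Real.sin θ * (((m : ℝ) - 1 / (2 * vt)) ^ 2)
        = Real.sin θ * (2 * vt * (m : ℝ) - 1) ^ 2 := by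
      field_simp
      ring
    have h11 : 4 * vt ^ 2 * Real.sin θ * R
        = 4 * vt ^ 2 * Real.sin θ + Real.sin θ - 4 * vt := by
      rw [hR]
      field_simp
    rw [h10, h11] at h9
    nlinarith [h9, hvt0, hs0]
  -- factorization argument
  have hf_ne : f ≠ 0 := fun h => hf0 (by simp [h])
  have hcont : f.content ≠ 0 := fun h => hf_ne (Polynomial.content_eq_zero_iff.mp h)
  set P := f.primPart with hP
  have hPdvd : P ∣ f := f.primPart_dvd
  have hPprim : P.IsPrimitive := f.isPrimitive_primPart
  have hPdeg : P.natDegree = n := by rw [hP, Polynomial.natDegree_primPart, hdeg]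
  suffices hirr : Irreducible P by
    have h1 : f.map (Int.castRingHom ℚ) =
        Polynomial.C ((f.content : ℚ)) * P.map (Int.castRingHom ℚ) := by
      conv_lhs => rw [f.eq_C_content_mul_primPart]
      rw [Polynomial.map_mul, Polynomial.map_C]
      norm_num
      exact Or.inl rfl
    rw [h1]
    rw [irreducible_isUnit_mul (Polynomial.isUnit_C.mpr
      (isUnit_iff_ne_zero.mpr (by exact_mod_cast hcont)))]
    exact (Polynomial.IsPrimitive.Int.irreducible_iff_irreducible_map_cast hPprim).mp hirr
  constructor
  · intro h
    have := Polynomial.natDegree_eq_zero_of_isUnit h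
    omega
  · intro a b hab
    by_contra hcon
    push_neg at hcon
    obtain ⟨ha, hb⟩ := hcon
    have hdega : 1 ≤ a.natDegree := by
      by_contra h
      push_neg at h
      have h0 : a.natDegree = 0 := by omega
      have hac : a = Polynomial.C (a.coeff 0) := Polynomial.eq_C_of_natDegree_eq_zero h0
      have : IsUnit (a.coeff 0) := by
        apply hPprim (a.coeff 0)
        rw [← hac]
        exact Dvd.intro b hab.symm
      exact ha (hac ▸ Polynomial.isUnit_C.mpr this)
    have hdegb : 1 ≤ b.natDegree := by
      by_contra h
      push_neg at h
      have h0 : b.natDegree = 0 := by omega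
      have hbc : b = Polynomial.C (b.coeff 0) := Polynomial.eq_C_of_natDegree_eq_zero h0
      have : IsUnit (b.coeff 0) := by
        apply hPprim (b.coeff 0)
        rw [← hbc]
        exact Dvd.intro_left a hab.symm
      exact hb (hbc ▸ Polynomial.isUnit_C.mpr this)
    -- evaluation at m
    have hPev : P.eval m = a.eval m * b.eval m := by rw [hab, Polynomial.eval_mul]
    have hfev : f.eval m = f.content * P.eval m := by
      conv_lhs => rw [f.eq_C_content_mul_primPart]
      rw [Polynomial.eval_mul, Polynomial.eval_C]
    have hprime : Prime ((p : ℤ)) := Nat.prime_iff_prime_int.mp hp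
    have hunit : IsUnit (a.eval m) ∨ IsUnit (b.eval m) := by
      have hd : (p : ℤ) = a.eval m * (b.eval m * f.content) := by
        rw [← hfm, hfev, hPev]
        ring
      rcases hprime.irreducible.isUnit_or_isUnit hd with h | h
      · exact Or.inl h
      · exact Or.inr (isUnit_of_mul_isUnit_left h)
    have hadvd : a ∣ f := dvd_trans ⟨b, hab⟩ hPdvd
    have hbdvd : b ∣ f := dvd_trans ⟨a, by rw [hab]; ring⟩ hPdvd
    rcases hunit with h | h
    · exact no_unit_factor hf0 hθ0 hθ2 hrec hm hq hdega hadvd h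
    · exact no_unit_factor hf0 hθ0 hθ2 hrec hm hq hdegb hbdvd h
end
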